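/- arXiv:2209.04869 — 5 statements merged into one kernel-verified Lean document; each statement's English description precedes it below -/
import Mathlib

section
/- Finsler's Lemma, equivalence (i)⇔(ii): Let Φ ∈ ℝ^{N×N} be symmetric and Γ ∈ ℝ^{M×N}. Then ξᵀΦξ < 0 for every nonzero ξ ∈ ℝ^N satisfying Γξ = 0 if and only if there exists a matrix 𝔛 ∈ ℝ^{N×M} such that Φ + 𝔛Γ + Γᵀ𝔛ᵀ is negative definite. -/
open Matrix

/-- **Finsler's Lemma, equivalence (i)⇔(ii).**
Let `Φ ∈ ℝ^{N×N}` be symmetric and `Γ ∈ ℝ^{M×N}`. Then `ξᵀΦξ < 0` for every nonzero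
`ξ ∈ ℝ^N` with `Γξ = 0` if and only if there exists `𝔛 ∈ ℝ^{N×M}` such that
`Φ + 𝔛Γ + Γᵀ𝔛ᵀ` is negative definite (i.e. `ξᵀ(Φ + 𝔛Γ + Γᵀ𝔛ᵀ)ξ < 0` for all `ξ ≠ 0`). -/
theorem finsler_i_iff_ii {N M : ℕ}
    (Φ : Matrix (Fin N) (Fin N) ℝ) (hΦ : Φ.IsSymm)
    (Γ : Matrix (Fin M) (Fin N) ℝ) :
    (∀ ξ : Fin N → ℝ, ξ ≠ 0 → Γ *ᵥ ξ = 0 → ξ ⬝ᵥ Φ *ᵥ ξ < 0) ↔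
      (∃ 𝔛 : Matrix (Fin N) (Fin M) ℝ,
        ∀ ξ : Fin N → ℝ, ξ ≠ 0 → ξ ⬝ᵥ (Φ + 𝔛 * Γ + Γᵀ * 𝔛ᵀ) *ᵥ ξ < 0) := by
  constructor
  · intro h
    set f : (Fin N → ℝ) → ℝ := fun ξ => ξ ⬝ᵥ Φ *ᵥ ξ with hf_def
    set g : (Fin N → ℝ) → ℝ := fun ξ => (Γ *ᵥ ξ) ⬝ᵥ (Γ *ᵥ ξ) with hg_def
    have hfc : Continuous f := by
      simp only [hf_def, dotProduct, Matrix.mulVec]; fun_prop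
    have hgc : Continuous g := by
      simp only [hg_def, dotProduct, Matrix.mulVec]; fun_prop
    have hg0 : ∀ ξ, 0 ≤ g ξ := fun ξ => Finset.sum_nonneg fun i _ => mul_self_nonneg _
    have hgker : ∀ ξ, g ξ = 0 → Γ *ᵥ ξ = 0 := by
      intro ξ hg
      exact dotProduct_self_eq_zero.mp hg
    -- the compact set where f is nonnegative on the sphere
    set K : Set (Fin N → ℝ) := {ξ | ‖ξ‖ = 1 ∧ 0 ≤ f ξ} with hK_def
    have hKc : IsCompact K := by
      have h1 : K = (Metric.sphere (0 : Fin N → ℝ) 1) ∩ f ⁻¹' (Set.Ici 0) := by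
        ext ξ; simp [hK_def, Metric.mem_sphere, dist_eq_norm]
      rw [h1]
      exact (isCompact_sphere 0 1).inter_right (isClosed_Ici.preimage hfc)
    have key : ∃ μ : ℝ, 0 ≤ μ ∧ ∀ u : Fin N → ℝ, ‖u‖ = 1 → f u - μ * g u < 0 := by
      rcases Set.eq_empty_or_nonempty K with hK | hK
      · refine ⟨0, le_refl _, fun u hu => ?_⟩
        have : u ∉ K := by rw [hK]; exact Set.notMem_empty u
        have hfu : ¬ (0 ≤ f u) := fun h0 => this ⟨hu, h0⟩
        simpa using lt_of_not_ge hfu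
      · -- min of g on K is positive
        obtain ⟨u₀, hu₀K, hu₀min⟩ := hKc.exists_isMinOn hK hgc.continuousOn
        obtain ⟨u₁, hu₁K, hu₁max⟩ := hKc.exists_isMaxOn hK hfc.continuousOn
        set m := g u₀ with hm
        set C := f u₁ with hC
        have hmpos : 0 < m := by
          rcases lt_or_eq_of_le (hg0 u₀) with h' | h'
          · exact h'
          · exfalso
            have hker := hgker u₀ h'.symm
            have hne : u₀ ≠ 0 := by
              intro h0; rw [h0] at hu₀K; simp [hK_def] at hu₀K
            have := h u₀ hne hker
            exact absurd hu₀K.2 (not_le.mpr this)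
        have hC0 : 0 ≤ C := le_trans hu₁K.2 (le_refl _)
        refine ⟨(C + 1) / m, by positivity, fun u hu => ?_⟩
        by_cases hfu : 0 ≤ f u
        · have huK : u ∈ K := ⟨hu, hfu⟩
          have h1 : m ≤ g u := hu₀min huK
          have h2 : f u ≤ C := hu₁max huK
          have h3 : (C + 1) / m * m ≤ (C + 1) / m * g u := by
            apply mul_le_mul_of_nonneg_left h1 (by positivity)
          rw [div_mul_cancel₀ _ (ne_of_gt hmpos)] at h3
          linarith
        · have h1 : 0 ≤ (C + 1) / m * g u := by
            apply mul_nonneg (by positivity) (hg0 u)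
          linarith [lt_of_not_ge hfu]
    obtain ⟨μ, hμ0, hμ⟩ := key
    refine ⟨(-(μ / 2)) • Γᵀ, fun ξ hξ => ?_⟩
    -- rewrite the quadratic form
    have hmat : (Φ + ((-(μ / 2)) • Γᵀ) * Γ + Γᵀ * ((-(μ / 2)) • Γᵀ)ᵀ)
        = Φ + (-μ) • (Γᵀ * Γ) := by
      rw [Matrix.transpose_smul, Matrix.transpose_transpose]
      rw [Matrix.smul_mul, Matrix.mul_smul]
      module
    rw [hmat]
    have hquad : ξ ⬝ᵥ (Φ + (-μ) • (Γᵀ * Γ)) *ᵥ ξ = f ξ - μ * g ξ := by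
      rw [Matrix.add_mulVec, dotProduct_add, Matrix.smul_mulVec,
        dotProduct_smul, ← Matrix.mulVec_mulVec, Matrix.dotProduct_mulVec ξ Γᵀ,
        Matrix.vecMul_transpose]
      simp [hf_def, hg_def, smul_eq_mul]; ring
    rw [hquad]
    -- scale to the sphere
    have hn : ‖ξ‖ ≠ 0 := norm_ne_zero_iff.mpr hξ
    set u : Fin N → ℝ := ‖ξ‖⁻¹ • ξ with hu_def
    have hu1 : ‖u‖ = 1 := by
      rw [hu_def, norm_smul, norm_inv, norm_norm, inv_mul_cancel₀ hn]
    have hscale : ξ = ‖ξ‖ • u := by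
      rw [hu_def, smul_smul, mul_inv_cancel₀ hn, one_smul]
    have hfs : f ξ = ‖ξ‖ ^ 2 * f u := by
      rw [hf_def]
      conv_lhs => rw [hscale]
      simp only [Matrix.mulVec_smul, smul_dotProduct, dotProduct_smul,
        smul_eq_mul]
      ring
    have hgs : g ξ = ‖ξ‖ ^ 2 * g u := by
      rw [hg_def]
      conv_lhs => rw [hscale]
      simp only [Matrix.mulVec_smul, smul_dotProduct, dotProduct_smul,
        smul_eq_mul]
      ring
    have := hμ u hu1
    have hpos : 0 < ‖ξ‖ ^ 2 := by positivity
    calc f ξ - μ * g ξ = ‖ξ‖ ^ 2 * (f u - μ * g u) := by rw [hfs, hgs]; ring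
      _ < 0 := mul_neg_of_pos_of_neg hpos this
  · rintro ⟨𝔛, h𝔛⟩ ξ hξ hker
    have h1 : ξ ⬝ᵥ (Φ + 𝔛 * Γ + Γᵀ * 𝔛ᵀ) *ᵥ ξ = ξ ⬝ᵥ Φ *ᵥ ξ := by
      rw [Matrix.add_mulVec, Matrix.add_mulVec, dotProduct_add,
        dotProduct_add, ← Matrix.mulVec_mulVec, ← Matrix.mulVec_mulVec, hker,
        Matrix.mulVec_zero, dotProduct_zero]
      rw [Matrix.dotProduct_mulVec ξ Γᵀ, Matrix.vecMul_transpose, hker,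
        zero_dotProduct]
      ring
    rw [← h1]
    exact h𝔛 ξ hξ
end

section
/- Positive definiteness and quadratic-form representation of the Lyapunov–Krasovskii functional: if P ∈ ℝ^{3n×3n} and Q₁, Q₂, Z₁, Z₂ ∈ ℝ^{n×n} are symmetric positive definite, then there exists a symmetric positive definite matrix S ∈ ℝ^{n(d_M+1)×n(d_M+1)} such that for every sequence x : ℤ → ℝⁿ and every k, V(k) = x̄(k)ᵀS x̄(k), where x̄(k) = (x(k), x(k−1), …, x(k−d_M)) ∈ ℝ^{n(d_M+1)}. In particular V(k) > 0 whenever x̄(k) ≠ 0. -/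
open Matrix Finset

/-- The Lyapunov–Krasovskii functional
`V(k) = w(k)ᵀPw(k) + Σ_{l=k−d_m}^{k−1} x(l)ᵀQ₁x(l) + Σ_{l=k−d_M}^{k−d_m−1} x(l)ᵀQ₂x(l)
  + d_m Σ_{l=−d_m+1}^{0} Σ_{i=k+l}^{k} η(i)ᵀZ₁η(i)
  + d_Δ Σ_{l=−d_M+1}^{−d_m} Σ_{i=k+l}^{k} η(i)ᵀZ₂η(i)`,
where `w(k) = (x(k), Σ_{l=k−d_m}^{k−1} x(l), Σ_{l=k−d_M}^{k−d_m−1} x(l))` and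
`η(i) = x(i) − x(i−1)`. -/
noncomputable def LKF (n d_m d_M : ℕ)
    (P : Matrix (Fin n ⊕ Fin n ⊕ Fin n) (Fin n ⊕ Fin n ⊕ Fin n) ℝ)
    (Q₁ Q₂ Z₁ Z₂ : Matrix (Fin n) (Fin n) ℝ)
    (x : ℤ → Fin n → ℝ) (k : ℤ) : ℝ :=
  (Sum.elim (x k) (Sum.elim (∑ l ∈ Finset.Icc (k - (d_m : ℤ)) (k - 1), x l)
        (∑ l ∈ Finset.Icc (k - (d_M : ℤ)) (k - (d_m : ℤ) - 1), x l)))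
    ⬝ᵥ P *ᵥ
    (Sum.elim (x k) (Sum.elim (∑ l ∈ Finset.Icc (k - (d_m : ℤ)) (k - 1), x l)
        (∑ l ∈ Finset.Icc (k - (d_M : ℤ)) (k - (d_m : ℤ) - 1), x l)))
  + ∑ l ∈ Finset.Icc (k - (d_m : ℤ)) (k - 1), x l ⬝ᵥ Q₁ *ᵥ x l
  + ∑ l ∈ Finset.Icc (k - (d_M : ℤ)) (k - (d_m : ℤ) - 1), x l ⬝ᵥ Q₂ *ᵥ x l
  + (d_m : ℝ) * ∑ l ∈ Finset.Icc (-(d_m : ℤ) + 1) 0,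
      ∑ i ∈ Finset.Icc (k + l) k, (x i - x (i - 1)) ⬝ᵥ Z₁ *ᵥ (x i - x (i - 1))
  + ((d_M : ℝ) - (d_m : ℝ)) * ∑ l ∈ Finset.Icc (-(d_M : ℤ) + 1) (-(d_m : ℤ)),
      ∑ i ∈ Finset.Icc (k + l) k, (x i - x (i - 1)) ⬝ᵥ Z₂ *ᵥ (x i - x (i - 1))

/-- The extended state `x̄(k) = (x(k), x(k−1), …, x(k−d_M))`, flattened to
a vector in `ℝ^{n(d_M+1)}`. -/
def extState (n d_M : ℕ) (x : ℤ → Fin n → ℝ) (k : ℤ) :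
    Fin (d_M + 1) × Fin n → ℝ :=
  fun p => x (k - ((p.1 : ℕ) : ℤ)) p.2


open Matrix Finset

section Aux

variable {n d_m d_M : ℕ}

/-- Block selection matrix: picks out block `j` from the flattened extended state. -/
def LKFsel (n d_M : ℕ) (j : ℕ) : Matrix (Fin n) (Fin (d_M + 1) × Fin n) ℝ :=
  Matrix.of fun i p => if (p.1 : ℕ) = j ∧ p.2 = i then 1 else 0

/-- Block `j` of a flattened vector (0 outside range). -/
def LKFblk (n d_M : ℕ) (v : Fin (d_M + 1) × Fin n → ℝ) (j : ℕ) : Fin n → ℝ :=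
  fun i => if h : j < d_M + 1 then v (⟨j, h⟩, i) else 0

lemma LKFsel_mulVec (j : ℕ) (v : Fin (d_M + 1) × Fin n → ℝ) :
    LKFsel n d_M j *ᵥ v = LKFblk n d_M v j := by
  funext i
  simp only [LKFsel, LKFblk, Matrix.mulVec, dotProduct, Matrix.of_apply, ite_mul, one_mul,
    zero_mul]
  by_cases h : j < d_M + 1
  · rw [dif_pos h, Finset.sum_eq_single (⟨⟨j, h⟩, i⟩ : Fin (d_M + 1) × Fin n)]
    · simp
    · intro b _ hb
      rw [if_neg]
      rintro ⟨h1, h2⟩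
      exact hb (Prod.ext (Fin.ext h1) h2)
    · simp
  · rw [dif_neg h]
    apply Finset.sum_eq_zero
    intro p _
    rw [if_neg]
    rintro ⟨h1, -⟩
    exact h (h1 ▸ p.1.isLt)

lemma LKFsum_mulVec {α β γ : Type*} [Fintype β] (s : Finset γ) (M : γ → Matrix α β ℝ)
    (v : β → ℝ) :
    (∑ j ∈ s, M j) *ᵥ v = ∑ j ∈ s, (M j *ᵥ v) := by
  induction s using Finset.cons_induction with
  | empty => simp [Matrix.zero_mulVec]
  | cons a s ha ih => simp [Finset.sum_cons, Matrix.add_mulVec, ih]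

lemma LKFdot_sum {α γ : Type*} [Fintype α] (s : Finset γ) (v : α → ℝ) (w : γ → α → ℝ) :
    v ⬝ᵥ (∑ j ∈ s, w j) = ∑ j ∈ s, v ⬝ᵥ w j := by
  induction s using Finset.cons_induction with
  | empty => simp
  | cons a s ha ih => simp [Finset.sum_cons, dotProduct_add, ih]

lemma LKFquad_conj {α : Type*} [Fintype α] (A : Matrix α (Fin (d_M + 1) × Fin n) ℝ)
    (M : Matrix α α ℝ) (v : Fin (d_M + 1) × Fin n → ℝ) :
    v ⬝ᵥ (Aᵀ * M * A) *ᵥ v = (A *ᵥ v) ⬝ᵥ M *ᵥ (A *ᵥ v) := by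
  rw [← Matrix.mulVec_mulVec, ← Matrix.mulVec_mulVec, Matrix.dotProduct_mulVec,
    Matrix.vecMul_transpose]

lemma LKFconj_isSymm {α β : Type*} [Fintype α] [Fintype β] (A : Matrix α β ℝ)
    {M : Matrix α α ℝ} (hM : M.IsSymm) : (Aᵀ * M * A).IsSymm := by
  unfold Matrix.IsSymm at *
  rw [Matrix.transpose_mul, Matrix.transpose_mul, Matrix.transpose_transpose, hM,
    Matrix.mul_assoc]

lemma LKFisSymm_sum {γ β : Type*} [Fintype β] (s : Finset γ) (M : γ → Matrix β β ℝ)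
    (h : ∀ j ∈ s, (M j).IsSymm) : (∑ j ∈ s, M j).IsSymm := by
  unfold Matrix.IsSymm at *
  rw [Matrix.transpose_sum]
  exact Finset.sum_congr rfl h

lemma LKFpd_nonneg {α : Type*} [Fintype α] {M : Matrix α α ℝ}
    (hM : ∀ v : α → ℝ, v ≠ 0 → 0 < v ⬝ᵥ M *ᵥ v) (u : α → ℝ) : 0 ≤ u ⬝ᵥ M *ᵥ u := by
  rcases eq_or_ne u 0 with rfl | h
  · simp
  · exact (hM u h).le

lemma LKFsum_Icc_shift {M : Type*} [AddCommMonoid M] (f : ℤ → M) (k : ℤ) (a b : ℕ) :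
    ∑ l ∈ Finset.Icc (k - (b : ℤ)) (k - (a : ℤ)), f l
      = ∑ j ∈ Finset.Icc a b, f (k - (j : ℤ)) := by
  refine Finset.sum_nbij' (i := fun l => (k - l).toNat) (j := fun j => k - (j : ℤ))
    ?_ ?_ ?_ ?_ ?_
  · intro l hl; simp only [Finset.mem_Icc] at *; omega
  · intro j hj; simp only [Finset.mem_Icc] at *; omega
  · intro l hl; simp only [Finset.mem_Icc] at hl; omega
  · intro j hj; simp only [Finset.mem_Icc] at hj; omega
  · intro l hl; simp only [Finset.mem_Icc] at hl; congr 1; omega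

end Aux
section Main

variable (n d_m d_M : ℕ)

/-- The `w`-vector of a flattened extended state. -/
def LKFW (v : Fin (d_M + 1) × Fin n → ℝ) : Fin n ⊕ Fin n ⊕ Fin n → ℝ :=
  Sum.elim (LKFblk n d_M v 0)
    (Sum.elim (∑ j ∈ Finset.Icc 1 d_m, LKFblk n d_M v j)
      (∑ j ∈ Finset.Icc (d_m + 1) d_M, LKFblk n d_M v j))

/-- The matrix realizing `LKFW`. -/
def LKFselW : Matrix (Fin n ⊕ Fin n ⊕ Fin n) (Fin (d_M + 1) × Fin n) ℝ :=
  Matrix.of (Sum.elim (LKFsel n d_M 0)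
    (Sum.elim (∑ j ∈ Finset.Icc 1 d_m, LKFsel n d_M j)
      (∑ j ∈ Finset.Icc (d_m + 1) d_M, LKFsel n d_M j)))

lemma LKFselW_mulVec (v : Fin (d_M + 1) × Fin n → ℝ) :
    LKFselW n d_m d_M *ᵥ v = LKFW n d_m d_M v := by
  funext s
  rcases s with i | s
  · show (LKFsel n d_M 0 *ᵥ v) i = _
    rw [LKFsel_mulVec]; rfl
  rcases s with i | i
  · show ((∑ j ∈ Finset.Icc 1 d_m, LKFsel n d_M j) *ᵥ v) i = _
    rw [LKFsum_mulVec]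
    simp [LKFW, Finset.sum_apply, LKFsel_mulVec]
  · show ((∑ j ∈ Finset.Icc (d_m + 1) d_M, LKFsel n d_M j) *ᵥ v) i = _
    rw [LKFsum_mulVec]
    simp [LKFW, Finset.sum_apply, LKFsel_mulVec]

variable (P : Matrix (Fin n ⊕ Fin n ⊕ Fin n) (Fin n ⊕ Fin n ⊕ Fin n) ℝ)
variable (Q₁ Q₂ Z₁ Z₂ : Matrix (Fin n) (Fin n) ℝ)

/-- The LKF as a quadratic form on the flattened extended state. -/
noncomputable def LKF' (v : Fin (d_M + 1) × Fin n → ℝ) : ℝ :=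
  LKFW n d_m d_M v ⬝ᵥ P *ᵥ LKFW n d_m d_M v
  + ∑ j ∈ Finset.Icc 1 d_m, LKFblk n d_M v j ⬝ᵥ Q₁ *ᵥ LKFblk n d_M v j
  + ∑ j ∈ Finset.Icc (d_m + 1) d_M, LKFblk n d_M v j ⬝ᵥ Q₂ *ᵥ LKFblk n d_M v j
  + (d_m : ℝ) * ∑ c ∈ Finset.Icc 0 (d_m - 1), ∑ a ∈ Finset.Icc 0 c,
      (LKFblk n d_M v a - LKFblk n d_M v (a + 1)) ⬝ᵥ Z₁ *ᵥ
        (LKFblk n d_M v a - LKFblk n d_M v (a + 1))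
  + ((d_M : ℝ) - (d_m : ℝ)) * ∑ c ∈ Finset.Icc d_m (d_M - 1), ∑ a ∈ Finset.Icc 0 c,
      (LKFblk n d_M v a - LKFblk n d_M v (a + 1)) ⬝ᵥ Z₂ *ᵥ
        (LKFblk n d_M v a - LKFblk n d_M v (a + 1))

/-- The matrix of the quadratic form `LKF'`. -/
noncomputable def LKFS : Matrix (Fin (d_M + 1) × Fin n) (Fin (d_M + 1) × Fin n) ℝ :=
  (LKFselW n d_m d_M)ᵀ * P * LKFselW n d_m d_M
  + ∑ j ∈ Finset.Icc 1 d_m, (LKFsel n d_M j)ᵀ * Q₁ * LKFsel n d_M j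
  + ∑ j ∈ Finset.Icc (d_m + 1) d_M, (LKFsel n d_M j)ᵀ * Q₂ * LKFsel n d_M j
  + (d_m : ℝ) • ∑ c ∈ Finset.Icc 0 (d_m - 1), ∑ a ∈ Finset.Icc 0 c,
      (LKFsel n d_M a - LKFsel n d_M (a + 1))ᵀ * Z₁ * (LKFsel n d_M a - LKFsel n d_M (a + 1))
  + ((d_M : ℝ) - (d_m : ℝ)) • ∑ c ∈ Finset.Icc d_m (d_M - 1), ∑ a ∈ Finset.Icc 0 c,
      (LKFsel n d_M a - LKFsel n d_M (a + 1))ᵀ * Z₂ * (LKFsel n d_M a - LKFsel n d_M (a + 1))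

lemma LKFS_quad (v : Fin (d_M + 1) × Fin n → ℝ) :
    v ⬝ᵥ LKFS n d_m d_M P Q₁ Q₂ Z₁ Z₂ *ᵥ v = LKF' n d_m d_M P Q₁ Q₂ Z₁ Z₂ v := by
  simp only [LKFS, LKF', Matrix.add_mulVec, dotProduct_add, Matrix.smul_mulVec,
    dotProduct_smul, smul_eq_mul, LKFsum_mulVec, LKFdot_sum, LKFquad_conj,
    Matrix.sub_mulVec, LKFsel_mulVec, LKFselW_mulVec]

lemma LKFS_isSymm (hPs : P.IsSymm) (hQ₁s : Q₁.IsSymm) (hQ₂s : Q₂.IsSymm)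
    (hZ₁s : Z₁.IsSymm) (hZ₂s : Z₂.IsSymm) :
    (LKFS n d_m d_M P Q₁ Q₂ Z₁ Z₂).IsSymm := by
  refine Matrix.IsSymm.add (Matrix.IsSymm.add (Matrix.IsSymm.add (Matrix.IsSymm.add
    (LKFconj_isSymm _ hPs) ?_) ?_) ?_) ?_
  · exact LKFisSymm_sum _ _ fun j _ => LKFconj_isSymm _ hQ₁s
  · exact LKFisSymm_sum _ _ fun j _ => LKFconj_isSymm _ hQ₂s
  · exact Matrix.IsSymm.smul (LKFisSymm_sum _ _ fun c _ =>
      LKFisSymm_sum _ _ fun a _ => LKFconj_isSymm _ hZ₁s) _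
  · exact Matrix.IsSymm.smul (LKFisSymm_sum _ _ fun c _ =>
      LKFisSymm_sum _ _ fun a _ => LKFconj_isSymm _ hZ₂s) _

end Main
section Main2

variable {n d_m d_M : ℕ}
variable {P : Matrix (Fin n ⊕ Fin n ⊕ Fin n) (Fin n ⊕ Fin n ⊕ Fin n) ℝ}
variable {Q₁ Q₂ Z₁ Z₂ : Matrix (Fin n) (Fin n) ℝ}

lemma LKF'_pos (hdm : 1 ≤ d_m) (hmM : d_m ≤ d_M)
    (hP : ∀ v : Fin n ⊕ Fin n ⊕ Fin n → ℝ, v ≠ 0 → 0 < v ⬝ᵥ P *ᵥ v)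
    (hQ₁ : ∀ v : Fin n → ℝ, v ≠ 0 → 0 < v ⬝ᵥ Q₁ *ᵥ v)
    (hQ₂ : ∀ v : Fin n → ℝ, v ≠ 0 → 0 < v ⬝ᵥ Q₂ *ᵥ v)
    (hZ₁ : ∀ v : Fin n → ℝ, v ≠ 0 → 0 < v ⬝ᵥ Z₁ *ᵥ v)
    (hZ₂ : ∀ v : Fin n → ℝ, v ≠ 0 → 0 < v ⬝ᵥ Z₂ *ᵥ v)
    (v : Fin (d_M + 1) × Fin n → ℝ) (hv : v ≠ 0) :
    0 < LKF' n d_m d_M P Q₁ Q₂ Z₁ Z₂ v := by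
  have hA : 0 ≤ LKFW n d_m d_M v ⬝ᵥ P *ᵥ LKFW n d_m d_M v := LKFpd_nonneg hP _
  have hB : 0 ≤ ∑ j ∈ Finset.Icc 1 d_m, LKFblk n d_M v j ⬝ᵥ Q₁ *ᵥ LKFblk n d_M v j :=
    Finset.sum_nonneg fun j _ => LKFpd_nonneg hQ₁ _
  have hC : 0 ≤ ∑ j ∈ Finset.Icc (d_m + 1) d_M, LKFblk n d_M v j ⬝ᵥ Q₂ *ᵥ LKFblk n d_M v j :=
    Finset.sum_nonneg fun j _ => LKFpd_nonneg hQ₂ _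
  have hD : 0 ≤ (d_m : ℝ) * ∑ c ∈ Finset.Icc 0 (d_m - 1), ∑ a ∈ Finset.Icc 0 c,
      (LKFblk n d_M v a - LKFblk n d_M v (a + 1)) ⬝ᵥ Z₁ *ᵥ
        (LKFblk n d_M v a - LKFblk n d_M v (a + 1)) :=
    mul_nonneg (Nat.cast_nonneg _) (Finset.sum_nonneg fun c _ =>
      Finset.sum_nonneg fun a _ => LKFpd_nonneg hZ₁ _)
  have hE : 0 ≤ ((d_M : ℝ) - (d_m : ℝ)) * ∑ c ∈ Finset.Icc d_m (d_M - 1), ∑ a ∈ Finset.Icc 0 c,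
      (LKFblk n d_M v a - LKFblk n d_M v (a + 1)) ⬝ᵥ Z₂ *ᵥ
        (LKFblk n d_M v a - LKFblk n d_M v (a + 1)) :=
    mul_nonneg (sub_nonneg.2 (by exact_mod_cast hmM))
      (Finset.sum_nonneg fun c _ => Finset.sum_nonneg fun a _ => LKFpd_nonneg hZ₂ _)
  obtain ⟨p, hp⟩ := Function.ne_iff.mp hv
  have hblk : LKFblk n d_M v (p.1 : ℕ) p.2 = v p := by
    simp [LKFblk, p.1.isLt]
  have hblkne : LKFblk n d_M v (p.1 : ℕ) ≠ 0 := by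
    intro h
    apply hp
    rw [← hblk, h]
    rfl
  rcases Nat.lt_or_ge (p.1 : ℕ) 1 with h0 | h1
  · have h00 : (p.1 : ℕ) = 0 := by omega
    have hWne : LKFW n d_m d_M v ≠ 0 := by
      intro h
      apply hblkne
      funext i
      have := congrFun h (Sum.inl i)
      rw [h00]
      simpa [LKFW] using this
    have hA' := hP _ hWne
    simp only [LKF']
    linarith
  · rcases le_or_gt (p.1 : ℕ) d_m with h2 | h2
    · have hB' : 0 < ∑ j ∈ Finset.Icc 1 d_m, LKFblk n d_M v j ⬝ᵥ Q₁ *ᵥ LKFblk n d_M v j :=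
        Finset.sum_pos' (fun j _ => LKFpd_nonneg hQ₁ _)
          ⟨(p.1 : ℕ), by simp [Finset.mem_Icc]; omega, hQ₁ _ hblkne⟩
      simp only [LKF']
      linarith
    · have h3 : (p.1 : ℕ) ≤ d_M := Nat.lt_succ_iff.mp p.1.isLt
      have hC' : 0 < ∑ j ∈ Finset.Icc (d_m + 1) d_M,
          LKFblk n d_M v j ⬝ᵥ Q₂ *ᵥ LKFblk n d_M v j :=
        Finset.sum_pos' (fun j _ => LKFpd_nonneg hQ₂ _)
          ⟨(p.1 : ℕ), by simp [Finset.mem_Icc]; omega, hQ₂ _ hblkne⟩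
      simp only [LKF']
      linarith

lemma LKF_eq_LKF' (hdm : 1 ≤ d_m) (hmM : d_m ≤ d_M) (x : ℤ → Fin n → ℝ) (k : ℤ) :
    LKF n d_m d_M P Q₁ Q₂ Z₁ Z₂ x k
      = LKF' n d_m d_M P Q₁ Q₂ Z₁ Z₂ (extState n d_M x k) := by
  set v := extState n d_M x k with hv
  have hdM : 1 ≤ d_M := le_trans hdm hmM
  have hblk : ∀ j : ℕ, j ≤ d_M → LKFblk n d_M v j = x (k - (j : ℤ)) := by
    intro j hj
    funext i
    simp [LKFblk, extState, Nat.lt_succ_of_le hj, hv]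
  have e0 : x k = LKFblk n d_M v 0 := by
    rw [hblk 0 (Nat.zero_le _)]
    simp
  have hS1 : ∑ l ∈ Finset.Icc (k - (d_m : ℤ)) (k - 1), x l
      = ∑ j ∈ Finset.Icc 1 d_m, LKFblk n d_M v j := by
    have H := LKFsum_Icc_shift x k 1 d_m
    rw [show ((1 : ℕ) : ℤ) = 1 by norm_num] at H
    rw [H]
    exact Finset.sum_congr rfl fun j hj =>
      (hblk j (le_trans (Finset.mem_Icc.mp hj).2 hmM)).symm
  have hS2 : ∑ l ∈ Finset.Icc (k - (d_M : ℤ)) (k - (d_m : ℤ) - 1), x l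
      = ∑ j ∈ Finset.Icc (d_m + 1) d_M, LKFblk n d_M v j := by
    have H := LKFsum_Icc_shift x k (d_m + 1) d_M
    rw [show k - ((d_m + 1 : ℕ) : ℤ) = k - (d_m : ℤ) - 1 by push_cast; ring] at H
    rw [H]
    exact Finset.sum_congr rfl fun j hj => (hblk j (Finset.mem_Icc.mp hj).2).symm
  have hQ1e : ∑ l ∈ Finset.Icc (k - (d_m : ℤ)) (k - 1), x l ⬝ᵥ Q₁ *ᵥ x l
      = ∑ j ∈ Finset.Icc 1 d_m, LKFblk n d_M v j ⬝ᵥ Q₁ *ᵥ LKFblk n d_M v j := by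
    have H := LKFsum_Icc_shift (fun l => x l ⬝ᵥ Q₁ *ᵥ x l) k 1 d_m
    rw [show ((1 : ℕ) : ℤ) = 1 by norm_num] at H
    rw [H]
    refine Finset.sum_congr rfl fun j hj => ?_
    rw [hblk j (le_trans (Finset.mem_Icc.mp hj).2 hmM)]
  have hQ2e : ∑ l ∈ Finset.Icc (k - (d_M : ℤ)) (k - (d_m : ℤ) - 1), x l ⬝ᵥ Q₂ *ᵥ x l
      = ∑ j ∈ Finset.Icc (d_m + 1) d_M, LKFblk n d_M v j ⬝ᵥ Q₂ *ᵥ LKFblk n d_M v j := by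
    have H := LKFsum_Icc_shift (fun l => x l ⬝ᵥ Q₂ *ᵥ x l) k (d_m + 1) d_M
    rw [show k - ((d_m + 1 : ℕ) : ℤ) = k - (d_m : ℤ) - 1 by push_cast; ring] at H
    rw [H]
    refine Finset.sum_congr rfl fun j hj => ?_
    rw [hblk j (Finset.mem_Icc.mp hj).2]
  have hZsum : ∀ (Z : Matrix (Fin n) (Fin n) ℝ) (lo hi : ℤ) (a b : ℕ),
      lo = -(b : ℤ) → hi = -(a : ℤ) → b ≤ d_M - 1 →
      ∑ l ∈ Finset.Icc lo hi, ∑ i ∈ Finset.Icc (k + l) k,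
          (x i - x (i - 1)) ⬝ᵥ Z *ᵥ (x i - x (i - 1))
        = ∑ c ∈ Finset.Icc a b, ∑ a' ∈ Finset.Icc 0 c,
            (LKFblk n d_M v a' - LKFblk n d_M v (a' + 1)) ⬝ᵥ Z *ᵥ
              (LKFblk n d_M v a' - LKFblk n d_M v (a' + 1)) := by
    intro Z lo hi a b hlo hhi hbd
    subst hlo hhi
    have H := LKFsum_Icc_shift (fun l => ∑ i ∈ Finset.Icc (k + l) k,
      (x i - x (i - 1)) ⬝ᵥ Z *ᵥ (x i - x (i - 1))) 0 a b
    simp only [zero_sub] at H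
    rw [H]
    refine Finset.sum_congr rfl fun c hc => ?_
    have hc2 : c ≤ d_M - 1 := le_trans (Finset.mem_Icc.mp hc).2 hbd
    rw [show k + -(c : ℤ) = k - (c : ℤ) by ring]
    have H2 := LKFsum_Icc_shift (fun i => (x i - x (i - 1)) ⬝ᵥ Z *ᵥ (x i - x (i - 1))) k 0 c
    simp only [Nat.cast_zero, sub_zero] at H2
    rw [H2]
    refine Finset.sum_congr rfl fun a' ha' => ?_
    have ha'2 : a' ≤ c := (Finset.mem_Icc.mp ha').2
    rw [hblk a' (by omega), hblk (a' + 1) (by omega)]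
    rw [show k - (a' : ℤ) - 1 = k - ((a' + 1 : ℕ) : ℤ) by push_cast; ring]
  have hZ1e := hZsum Z₁ (-(d_m : ℤ) + 1) 0 0 (d_m - 1) (by omega) (by simp) (by omega)
  have hZ2e := hZsum Z₂ (-(d_M : ℤ) + 1) (-(d_m : ℤ)) d_m (d_M - 1) (by omega) (by simp)
    (by omega)
  simp only [LKF, LKF', LKFW]
  rw [e0, hS1, hS2, hQ1e, hQ2e, hZ1e, hZ2e]

end Main2
/-- **Positive definiteness and quadratic-form representation of the
Lyapunov–Krasovskii functional:** if `P, Q₁, Q₂, Z₁, Z₂` are symmetric positive definite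
then there is a symmetric positive definite `S` with `V(k) = x̄(k)ᵀS x̄(k)` for every
sequence `x` and every `k`; in particular `V(k) > 0` whenever `x̄(k) ≠ 0`. -/
theorem LKF_quadratic_form (n d_m d_M : ℕ) (hn : 1 ≤ n) (hdm : 1 ≤ d_m) (hmM : d_m ≤ d_M)
    (P : Matrix (Fin n ⊕ Fin n ⊕ Fin n) (Fin n ⊕ Fin n ⊕ Fin n) ℝ)
    (Q₁ Q₂ Z₁ Z₂ : Matrix (Fin n) (Fin n) ℝ)
    (hPs : P.IsSymm) (hP : ∀ v : Fin n ⊕ Fin n ⊕ Fin n → ℝ, v ≠ 0 → 0 < v ⬝ᵥ P *ᵥ v)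
    (hQ₁s : Q₁.IsSymm) (hQ₁ : ∀ v : Fin n → ℝ, v ≠ 0 → 0 < v ⬝ᵥ Q₁ *ᵥ v)
    (hQ₂s : Q₂.IsSymm) (hQ₂ : ∀ v : Fin n → ℝ, v ≠ 0 → 0 < v ⬝ᵥ Q₂ *ᵥ v)
    (hZ₁s : Z₁.IsSymm) (hZ₁ : ∀ v : Fin n → ℝ, v ≠ 0 → 0 < v ⬝ᵥ Z₁ *ᵥ v)
    (hZ₂s : Z₂.IsSymm) (hZ₂ : ∀ v : Fin n → ℝ, v ≠ 0 → 0 < v ⬝ᵥ Z₂ *ᵥ v) :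
    ∃ S : Matrix (Fin (d_M + 1) × Fin n) (Fin (d_M + 1) × Fin n) ℝ,
      S.IsSymm ∧ (∀ v : Fin (d_M + 1) × Fin n → ℝ, v ≠ 0 → 0 < v ⬝ᵥ S *ᵥ v) ∧
      ∀ (x : ℤ → Fin n → ℝ) (k : ℤ),
        LKF n d_m d_M P Q₁ Q₂ Z₁ Z₂ x k
          = extState n d_M x k ⬝ᵥ S *ᵥ extState n d_M x k ∧
        (extState n d_M x k ≠ 0 → 0 < LKF n d_m d_M P Q₁ Q₂ Z₁ Z₂ x k) := by
  refine ⟨LKFS n d_m d_M P Q₁ Q₂ Z₁ Z₂,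
    LKFS_isSymm n d_m d_M P Q₁ Q₂ Z₁ Z₂ hPs hQ₁s hQ₂s hZ₁s hZ₂s, ?_, ?_⟩
  · intro v hv
    rw [LKFS_quad]
    exact LKF'_pos hdm hmM hP hQ₁ hQ₂ hZ₁ hZ₂ v hv
  · intro x k
    have heq : LKF n d_m d_M P Q₁ Q₂ Z₁ Z₂ x k
        = extState n d_M x k ⬝ᵥ LKFS n d_m d_M P Q₁ Q₂ Z₁ Z₂ *ᵥ extState n d_M x k := by
      rw [LKFS_quad]
      exact LKF_eq_LKF' hdm hmM x k
    refine ⟨heq, fun hne => ?_⟩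
    rw [heq, LKFS_quad]
    exact LKF'_pos hdm hmM hP hQ₁ hQ₂ hZ₁ hZ₂ _ hne
end

section
/- Reciprocally convex combination inequality: let R₁, R₂ ∈ ℝ^{n×n} be symmetric and X ∈ ℝ^{n×n} be such that the 2n×2n block matrix [[R₁, X], [Xᵀ, R₂]] is positive semidefinite. Then for every real α with 0 < α < 1 and all vectors v₁, v₂ ∈ ℝⁿ, (1/α)·v₁ᵀR₁v₁ + (1/(1−α))·v₂ᵀR₂v₂ ≥ v₁ᵀR₁v₁ + v₂ᵀR₂v₂ + 2v₁ᵀXv₂. -/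
open Matrix

/-!
Evaluating the positive semidefinite block form at `((1 - α) v₁, -α v₂)` gives
`2 α (1 - α) v₁ᵀ X v₂ ≤ (1 - α)² v₁ᵀ R₁ v₁ + α² v₂ᵀ R₂ v₂`. Dividing by `α (1 - α)` and adding
`v₁ᵀ R₁ v₁ + v₂ᵀ R₂ v₂` to both sides is the claim, since `1 + (1 - α)/α = 1/α` and
`1 + α/(1 - α) = 1/(1 - α)`.
-/

namespace Matrix

variable {l m : Type*} [Fintype l] [Fintype m]

theorem sumElim_dotProduct_fromBlocks_mulVec_sumElim {R : Type*} [CommSemiring R]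
    (A : Matrix l l R) (B : Matrix l m R) (D : Matrix m m R) (x : l → R) (y : m → R) :
    Sum.elim x y ⬝ᵥ fromBlocks A B Bᵀ D *ᵥ Sum.elim x y
      = x ⬝ᵥ A *ᵥ x + 2 * (x ⬝ᵥ B *ᵥ y) + y ⬝ᵥ D *ᵥ y := by
  rw [fromBlocks_mulVec, Sum.elim_comp_inl, Sum.elim_comp_inr, sumElim_dotProduct_sumElim,
    dotProduct_add, dotProduct_add, dotProduct_transpose_mulVec]
  ring

theorem two_mul_mul_dotProduct_mulVec_le {R : Type*} [CommRing R] [PartialOrder R]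
    [IsOrderedRing R] {A : Matrix l l R} {B : Matrix l m R} {D : Matrix m m R}
    (hpsd : ∀ v : l ⊕ m → R, 0 ≤ v ⬝ᵥ fromBlocks A B Bᵀ D *ᵥ v)
    (a b : R) (x : l → R) (y : m → R) :
    2 * (a * b) * (x ⬝ᵥ B *ᵥ y) ≤ a ^ 2 * (x ⬝ᵥ A *ᵥ x) + b ^ 2 * (y ⬝ᵥ D *ᵥ y) := by
  have h := hpsd (Sum.elim (a • x) (-(b • y)))
  simp only [sumElim_dotProduct_fromBlocks_mulVec_sumElim, mulVec_neg, mulVec_smul,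
    dotProduct_neg, neg_dotProduct, dotProduct_smul, smul_dotProduct, smul_eq_mul] at h
  linear_combination h

end Matrix

theorem reciprocally_convex_general {n : ℕ}
    (R₁ R₂ X : Matrix (Fin n) (Fin n) ℝ)
    (hpsd : ∀ v : (Fin n ⊕ Fin n) → ℝ, 0 ≤ v ⬝ᵥ (Matrix.fromBlocks R₁ X Xᵀ R₂) *ᵥ v)
    (α : ℝ) (hα0 : 0 < α) (hα1 : α < 1) (v₁ v₂ : Fin n → ℝ) :
    v₁ ⬝ᵥ R₁ *ᵥ v₁ + v₂ ⬝ᵥ R₂ *ᵥ v₂ + 2 * (v₁ ⬝ᵥ X *ᵥ v₂)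
      ≤ (1 / α) * (v₁ ⬝ᵥ R₁ *ᵥ v₁) + (1 / (1 - α)) * (v₂ ⬝ᵥ R₂ *ᵥ v₂) := by
  have hβ0 : 0 < 1 - α := sub_pos.mpr hα1
  have key := two_mul_mul_dotProduct_mulVec_le hpsd (1 - α) α v₁ v₂
  rw [← sub_nonneg]
  have expand : (1 / α) * (v₁ ⬝ᵥ R₁ *ᵥ v₁) + (1 / (1 - α)) * (v₂ ⬝ᵥ R₂ *ᵥ v₂)
      - (v₁ ⬝ᵥ R₁ *ᵥ v₁ + v₂ ⬝ᵥ R₂ *ᵥ v₂ + 2 * (v₁ ⬝ᵥ X *ᵥ v₂))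
      = ((1 - α) ^ 2 * (v₁ ⬝ᵥ R₁ *ᵥ v₁) + α ^ 2 * (v₂ ⬝ᵥ R₂ *ᵥ v₂)
          - 2 * ((1 - α) * α) * (v₁ ⬝ᵥ X *ᵥ v₂)) / (α * (1 - α)) := by
    field_simp
    ring
  rw [expand]
  exact div_nonneg (sub_nonneg.mpr key) (mul_pos hα0 hβ0).le

/-- **Reciprocally convex combination inequality.**
If the block matrix `[[R₁, X], [Xᵀ, R₂]]` is positive semidefinite, then for every
`0 < α < 1` and all `v₁, v₂ ∈ ℝⁿ`,
`(1/α)v₁ᵀR₁v₁ + (1/(1−α))v₂ᵀR₂v₂ ≥ v₁ᵀR₁v₁ + v₂ᵀR₂v₂ + 2v₁ᵀXv₂`. -/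
theorem reciprocally_convex {n : ℕ}
    (R₁ R₂ X : Matrix (Fin n) (Fin n) ℝ) (hR₁ : R₁.IsSymm) (hR₂ : R₂.IsSymm)
    (hpsd : ∀ v : (Fin n ⊕ Fin n) → ℝ, 0 ≤ v ⬝ᵥ (Matrix.fromBlocks R₁ X Xᵀ R₂) *ᵥ v)
    (α : ℝ) (hα0 : 0 < α) (hα1 : α < 1) (v₁ v₂ : Fin n → ℝ) :
    v₁ ⬝ᵥ R₁ *ᵥ v₁ + v₂ ⬝ᵥ R₂ *ᵥ v₂ + 2 * (v₁ ⬝ᵥ X *ᵥ v₂)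
      ≤ (1 / α) * (v₁ ⬝ᵥ R₁ *ᵥ v₁) + (1 / (1 - α)) * (v₂ ⬝ᵥ R₂ *ᵥ v₂) :=
  reciprocally_convex_general R₁ R₂ X hpsd α hα0 hα1 v₁ v₂
end

section
/- (Lemma 3, path-complete stability criterion.) Let V₁, V₂ : (ℝⁿ)^{d_M+1} → ℝ be positive definite quadratic forms, i.e. V_j(x̄) = x̄ᵀS_jx̄ for symmetric positive definite matrices S₁, S₂ ∈ ℝ^{n(d_M+1)×n(d_M+1)}. For each integer l with d_m ≤ l ≤ d_M define the linear update map G_l : (ℝⁿ)^{d_M+1} → (ℝⁿ)^{d_M+1} by G_l(x̄₀, …, x̄_{d_M}) = (A x̄₀ + A_n x̄_{d_n} + A_d x̄_l, x̄₀, …, x̄_{d_M−1}). Suppose that for every nonzero x̄ ∈ (ℝⁿ)^{d_M+1}: (i) for every integer l with d_m ≤ l ≤ d_n, both V₁(G_l(x̄)) < V₁(x̄) and V₁(G_l(x̄)) < V₂(x̄); and (ii) for every integer l with d_n < l ≤ d_M, both V₂(G_l(x̄)) < V₂(x̄) and V₂(G_l(x̄)) < V₁(x̄). Then every solution of the delay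 system, for every admissible delay signal, satisfies x(k) → 0 as k → ∞. -/
/-!
Stack the delayed states into `X k = (x(k), x(k-1), …, x(k-d_M))`, so that
`X (k+1) = G_{d(k)} (X k)`, and attach to each admissible delay `l` the form `U_l = V₁` if
`l ≤ d_n` and `U_l = V₂` otherwise. The hypotheses say `U_{l'} (G_{l'} x̄) < U_l x̄` for all
admissible `l, l'` and `x̄ ≠ 0`; both sides are continuous and 2-homogeneous, so compactness of
the unit sphere upgrades this to `U_{l'} ∘ G_{l'} ≤ ρ U_l` with a single `ρ < 1`. Hence
`W k = U_{d(k)} (X (k+1))` satisfies `W (k+1) ≤ ρ W k`, and since every `U_l` dominates a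
multiple of `‖·‖²`, `X k → 0`.
-/
open Matrix Filter

/-- Padded access to the coordinates of a point of `(ℝⁿ)^{d_M+1}` by natural indices. -/
def pad (n d_M : ℕ) (xb : Fin (d_M + 1) → Fin n → ℝ) : ℕ → Fin n → ℝ :=
  fun i => if h : i < d_M + 1 then xb ⟨i, h⟩ else 0

/-- Flattening of a point of `(ℝⁿ)^{d_M+1}` into a vector of `ℝ^{n(d_M+1)}`. -/
def flat (n d_M : ℕ) (xb : Fin (d_M + 1) → Fin n → ℝ) : Fin (d_M + 1) × Fin n → ℝ :=
  fun p => xb p.1 p.2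

/-- The quadratic functional `x̄ ↦ x̄ᵀSx̄`. -/
noncomputable def Vq (n d_M : ℕ)
    (S : Matrix (Fin (d_M + 1) × Fin n) (Fin (d_M + 1) × Fin n) ℝ)
    (xb : Fin (d_M + 1) → Fin n → ℝ) : ℝ :=
  flat n d_M xb ⬝ᵥ S *ᵥ flat n d_M xb

/-- The linear update map
`G_l(x̄₀, …, x̄_{d_M}) = (A x̄₀ + A_n x̄_{d_n} + A_d x̄_l, x̄₀, …, x̄_{d_M−1})`. -/
noncomputable def Gmap (n d_n d_M : ℕ) (A An Ad : Matrix (Fin n) (Fin n) ℝ) (l : ℕ)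
    (xb : Fin (d_M + 1) → Fin n → ℝ) : Fin (d_M + 1) → Fin n → ℝ :=
  fun i => if (i : ℕ) = 0 then
      A *ᵥ pad n d_M xb 0 + An *ᵥ pad n d_M xb d_n + Ad *ᵥ pad n d_M xb l
    else pad n d_M xb ((i : ℕ) - 1)

open Topology

section Homogeneous

variable {E : Type*} [NormedAddCommGroup E] [NormedSpace ℝ E] {f g : E → ℝ}

lemma apply_zero_of_homogeneous (hf : ∀ (c : ℝ) x, f (c • x) = c ^ 2 * f x) : f 0 = 0 := by
  simpa using hf 0 0

lemma eq_norm_sq_mul_of_homogeneous (hf : ∀ (c : ℝ) x, f (c • x) = c ^ 2 * f x) (x : E) :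
    f x = ‖x‖ ^ 2 * f (‖x‖⁻¹ • x) := by
  rcases eq_or_ne x 0 with rfl | hx
  · simp [apply_zero_of_homogeneous hf]
  · rw [← hf, smul_smul, mul_inv_cancel₀ (norm_ne_zero_iff.2 hx), one_smul]

lemma inv_norm_smul_mem_unit_sphere {x : E} (hx : x ≠ 0) :
    ‖x‖⁻¹ • x ∈ Metric.sphere (0 : E) 1 :=
  mem_sphere_zero_iff_norm.2 (norm_smul_inv_norm (𝕜 := ℝ) hx)

variable [FiniteDimensional ℝ E]

theorem exists_lt_one_forall_le_mul_of_homogeneous (hf : Continuous f) (hg : Continuous g)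
    (hfh : ∀ (c : ℝ) x, f (c • x) = c ^ 2 * f x) (hgh : ∀ (c : ℝ) x, g (c • x) = c ^ 2 * g x)
    (hgpos : ∀ x, x ≠ 0 → 0 < g x) (hlt : ∀ x, x ≠ 0 → f x < g x) :
    ∃ ρ < 1, ∀ x, f x ≤ ρ * g x := by
  rcases subsingleton_or_nontrivial E with hE | hE
  · refine ⟨0, zero_lt_one, fun x => ?_⟩
    simp [Subsingleton.elim x 0, apply_zero_of_homogeneous hfh]
  obtain ⟨x₀, hx₀, hmax⟩ := (isCompact_sphere (0 : E) 1).exists_isMaxOn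
    (NormedSpace.sphere_nonempty.2 zero_le_one)
    (hf.continuousOn.div hg.continuousOn fun x hx =>
      (hgpos x (ne_zero_of_mem_unit_sphere ⟨x, hx⟩)).ne')
  have hx₀0 := ne_zero_of_mem_unit_sphere ⟨x₀, hx₀⟩
  refine ⟨f x₀ / g x₀, (div_lt_one (hgpos x₀ hx₀0)).2 (hlt x₀ hx₀0), fun x => ?_⟩
  rcases eq_or_ne x 0 with rfl | hx
  · simp [apply_zero_of_homogeneous hfh, apply_zero_of_homogeneous hgh]
  set u := ‖x‖⁻¹ • x
  have hu_mem : u ∈ Metric.sphere (0 : E) 1 := inv_norm_smul_mem_unit_sphere hx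
  have hu : f u ≤ f x₀ / g x₀ * g u :=
    (div_le_iff₀ (hgpos u (ne_zero_of_mem_unit_sphere ⟨u, hu_mem⟩))).1 (hmax hu_mem)
  rw [eq_norm_sq_mul_of_homogeneous hfh x, eq_norm_sq_mul_of_homogeneous hgh x]
  calc ‖x‖ ^ 2 * f u ≤ ‖x‖ ^ 2 * (f x₀ / g x₀ * g u) := by gcongr
    _ = f x₀ / g x₀ * (‖x‖ ^ 2 * g u) := by ring

theorem exists_pos_mul_norm_sq_le_of_homogeneous (hg : Continuous g)
    (hgh : ∀ (c : ℝ) x, g (c • x) = c ^ 2 * g x) (hgpos : ∀ x, x ≠ 0 → 0 < g x) :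
    ∃ c > 0, ∀ x, c * ‖x‖ ^ 2 ≤ g x := by
  rcases subsingleton_or_nontrivial E with hE | hE
  · refine ⟨1, one_pos, fun x => ?_⟩
    simp [Subsingleton.elim x 0, apply_zero_of_homogeneous hgh]
  obtain ⟨x₀, hx₀, hmin⟩ := (isCompact_sphere (0 : E) 1).exists_isMinOn
    (NormedSpace.sphere_nonempty.2 zero_le_one) hg.continuousOn
  refine ⟨g x₀, hgpos x₀ (ne_zero_of_mem_unit_sphere ⟨x₀, hx₀⟩), fun x => ?_⟩
  rcases eq_or_ne x 0 with rfl | hx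
  · simp [apply_zero_of_homogeneous hgh]
  rw [eq_norm_sq_mul_of_homogeneous hgh x, mul_comm]
  gcongr
  exact hmin (inv_norm_smul_mem_unit_sphere hx)

end Homogeneous

section Switching

variable {E ι : Type*} [NormedAddCommGroup E] [NormedSpace ℝ E] [FiniteDimensional ℝ E] [Finite ι]

theorem tendsto_zero_of_forall_lyapunov_lt (G : ι → E → E) (U : ι → E → ℝ)
    (hGc : ∀ i, Continuous (G i)) (hGh : ∀ i (c : ℝ) x, G i (c • x) = c • G i x)
    (hUc : ∀ i, Continuous (U i)) (hUh : ∀ i (c : ℝ) x, U i (c • x) = c ^ 2 * U i x)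
    (hUpos : ∀ i x, x ≠ 0 → 0 < U i x) (hdec : ∀ i i' x, x ≠ 0 → U i' (G i' x) < U i x)
    (σ : ℕ → ι) (X : ℕ → E) (hX : ∀ k, X (k + 1) = G (σ k) (X k)) :
    Tendsto X atTop (𝓝 0) := by
  have : Nonempty ι := ⟨σ 0⟩
  have hUnn : ∀ i x, 0 ≤ U i x := fun i x => by
    rcases eq_or_ne x 0 with rfl | hx
    · exact (apply_zero_of_homogeneous (hUh i)).ge
    · exact (hUpos i x hx).le
  obtain ⟨ρ, hρ0, hρ1, hρ⟩ : ∃ ρ, 0 ≤ ρ ∧ ρ < 1 ∧ ∀ i i' x, U i' (G i' x) ≤ ρ * U i x := by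
    choose r hr1 hr using fun p : ι × ι => exists_lt_one_forall_le_mul_of_homogeneous
      ((hUc p.2).comp (hGc p.2)) (hUc p.1) (fun c x => by simp [hGh, hUh]) (hUh p.1)
      (hUpos p.1) (hdec p.1 p.2)
    obtain ⟨p₀, hp₀⟩ := Finite.exists_max r
    refine ⟨max 0 (r p₀), le_max_left _ _, max_lt one_pos (hr1 p₀), fun i i' x => ?_⟩
    exact (hr (i, i') x).trans
      (mul_le_mul_of_nonneg_right ((hp₀ (i, i')).trans (le_max_right _ _)) (hUnn i x))
  obtain ⟨c, hc, hcU⟩ : ∃ c > 0, ∀ i x, c * ‖x‖ ^ 2 ≤ U i x := by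
    choose c hc hcU using fun i =>
      exists_pos_mul_norm_sq_le_of_homogeneous (hUc i) (hUh i) (hUpos i)
    obtain ⟨i₀, hi₀⟩ := Finite.exists_min c
    exact ⟨c i₀, hc i₀, fun i x =>
      (mul_le_mul_of_nonneg_right (hi₀ i) (sq_nonneg _)).trans (hcU i x)⟩
  set W : ℕ → ℝ := fun k => U (σ k) (X (k + 1))
  have hW_succ : ∀ k, W (k + 1) ≤ ρ * W k := fun k => by
    simpa only [W, hX (k + 1)] using hρ (σ k) (σ (k + 1)) (X (k + 1))
  have hW : ∀ k, W k ≤ ρ ^ k * W 0 := by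
    intro k
    induction k with
    | zero => simp
    | succ k ih =>
      calc W (k + 1) ≤ ρ * W k := hW_succ k
        _ ≤ ρ * (ρ ^ k * W 0) := by gcongr
        _ = ρ ^ (k + 1) * W 0 := by ring
  have hsq : Tendsto (fun k => ‖X (k + 1)‖ ^ 2) atTop (𝓝 0) := by
    refine squeeze_zero (fun k => sq_nonneg _) (fun k => ?_)
      (by simpa using (tendsto_pow_atTop_nhds_zero_of_lt_one hρ0 hρ1).mul_const (W 0 / c))
    rw [mul_div_assoc', le_div_iff₀' hc]
    exact (hcU _ _).trans (hW k)
  have hnorm := hsq.sqrt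
  simp only [Real.sqrt_sq (norm_nonneg _), Real.sqrt_zero] at hnorm
  exact (tendsto_add_atTop_iff_nat 1).1 (tendsto_zero_iff_norm_tendsto_zero.2 hnorm)

end Switching

section DelaySystem

variable {n d_n d_M : ℕ}

lemma Vq_smul (S : Matrix (Fin (d_M + 1) × Fin n) (Fin (d_M + 1) × Fin n) ℝ) (c : ℝ)
    (xb : Fin (d_M + 1) → Fin n → ℝ) : Vq n d_M S (c • xb) = c ^ 2 * Vq n d_M S xb := by
  have hflat : flat n d_M (c • xb) = c • flat n d_M xb := rfl
  simp only [Vq, hflat, mulVec_smul, smul_dotProduct, dotProduct_smul, smul_eq_mul]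
  ring

lemma Vq_continuous (S : Matrix (Fin (d_M + 1) × Fin n) (Fin (d_M + 1) × Fin n) ℝ) :
    Continuous (Vq n d_M S) := by
  have hflat : Continuous (flat n d_M) := by unfold flat; fun_prop
  exact hflat.dotProduct (continuous_const.matrix_mulVec hflat)

lemma Vq_pos {S : Matrix (Fin (d_M + 1) × Fin n) (Fin (d_M + 1) × Fin n) ℝ}
    (hS : ∀ v : Fin (d_M + 1) × Fin n → ℝ, v ≠ 0 → 0 < v ⬝ᵥ S *ᵥ v)
    {xb : Fin (d_M + 1) → Fin n → ℝ} (hxb : xb ≠ 0) : 0 < Vq n d_M S xb :=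
  hS _ fun h => hxb (funext fun i => funext fun j => congrFun h (i, j))

lemma pad_smul (c : ℝ) (xb : Fin (d_M + 1) → Fin n → ℝ) (m : ℕ) :
    pad n d_M (c • xb) m = c • pad n d_M xb m := by
  unfold pad
  split_ifs <;> simp

lemma pad_continuous (m : ℕ) : Continuous fun xb : Fin (d_M + 1) → Fin n → ℝ => pad n d_M xb m := by
  unfold pad
  split_ifs <;> fun_prop

lemma Gmap_smul (A An Ad : Matrix (Fin n) (Fin n) ℝ) (l : ℕ) (c : ℝ)
    (xb : Fin (d_M + 1) → Fin n → ℝ) :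
    Gmap n d_n d_M A An Ad l (c • xb) = c • Gmap n d_n d_M A An Ad l xb := by
  funext i
  by_cases hi : (i : ℕ) = 0 <;> simp [Gmap, hi, pad_smul, mulVec_smul]

lemma Gmap_continuous (A An Ad : Matrix (Fin n) (Fin n) ℝ) (l : ℕ) :
    Continuous (Gmap n d_n d_M A An Ad l) := by
  have := pad_continuous (n := n) (d_M := d_M)
  refine continuous_pi fun i => ?_
  by_cases hi : (i : ℕ) = 0 <;> simp only [Gmap, hi, if_true, if_false] <;> fun_prop

def delayState (n d_M : ℕ) (x : ℤ → Fin n → ℝ) (k : ℤ) : Fin (d_M + 1) → Fin n → ℝ :=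
  fun i => x (k - i)

lemma pad_delayState (x : ℤ → Fin n → ℝ) (k : ℤ) {m : ℕ} (hm : m ≤ d_M) :
    pad n d_M (delayState n d_M x k) m = x (k - m) := by
  simp [pad, delayState, Nat.lt_succ_of_le hm]

lemma delayState_succ {A An Ad : Matrix (Fin n) (Fin n) ℝ} {x : ℤ → Fin n → ℝ} {k : ℤ} {l : ℕ}
    (hnM : d_n ≤ d_M) (hl : l ≤ d_M)
    (hk : x (k + 1) = A *ᵥ x k + An *ᵥ x (k - d_n) + Ad *ᵥ x (k - l)) :
    delayState n d_M x (k + 1) = Gmap n d_n d_M A An Ad l (delayState n d_M x k) := by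
  funext i
  by_cases hi : (i : ℕ) = 0
  · simp [Gmap, hi, pad_delayState x k hnM, pad_delayState x k hl,
      pad_delayState x k (Nat.zero_le _), delayState, hk]
  · simp only [Gmap, hi, if_false, pad_delayState x k (by omega : (i : ℕ) - 1 ≤ d_M), delayState]
    congr 1
    omega

end DelaySystem

theorem path_complete_stability_general
    (n d_m d_n d_M : ℕ) (hnM : d_n ≤ d_M)
    (A An Ad : Matrix (Fin n) (Fin n) ℝ)
    (S₁ S₂ : Matrix (Fin (d_M + 1) × Fin n) (Fin (d_M + 1) × Fin n) ℝ)
    (hS₁pd : ∀ v : Fin (d_M + 1) × Fin n → ℝ, v ≠ 0 → 0 < v ⬝ᵥ S₁ *ᵥ v)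
    (hS₂pd : ∀ v : Fin (d_M + 1) × Fin n → ℝ, v ≠ 0 → 0 < v ⬝ᵥ S₂ *ᵥ v)
    (hmode1 : ∀ l : ℕ, d_m ≤ l → l ≤ d_n →
      ∀ xb : Fin (d_M + 1) → Fin n → ℝ, xb ≠ 0 →
        Vq n d_M S₁ (Gmap n d_n d_M A An Ad l xb) < Vq n d_M S₁ xb ∧
        Vq n d_M S₁ (Gmap n d_n d_M A An Ad l xb) < Vq n d_M S₂ xb)
    (hmode2 : ∀ l : ℕ, d_n < l → l ≤ d_M →
      ∀ xb : Fin (d_M + 1) → Fin n → ℝ, xb ≠ 0 →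
        Vq n d_M S₂ (Gmap n d_n d_M A An Ad l xb) < Vq n d_M S₂ xb ∧
        Vq n d_M S₂ (Gmap n d_n d_M A An Ad l xb) < Vq n d_M S₁ xb)
    (x : ℤ → Fin n → ℝ) (d : ℕ → ℤ)
    (hd : ∀ k : ℕ, (d_m : ℤ) ≤ d k ∧ d k ≤ (d_M : ℤ))
    (hx : ∀ k : ℕ, x ((k : ℤ) + 1)
      = A *ᵥ x (k : ℤ) + An *ᵥ x ((k : ℤ) - (d_n : ℤ)) + Ad *ᵥ x ((k : ℤ) - d k)) :
    Tendsto (fun k : ℕ => x (k : ℤ)) atTop (nhds 0) := by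
  let U (l : Set.Icc d_m d_M) := Vq n d_M (if (l : ℕ) ≤ d_n then S₁ else S₂)
  have hUpos (l : Set.Icc d_m d_M) (xb : Fin (d_M + 1) → Fin n → ℝ) (hxb : xb ≠ 0) :
      0 < U l xb := by
    by_cases hl : (l : ℕ) ≤ d_n <;> simp only [U, hl, if_true, if_false]
    exacts [Vq_pos hS₁pd hxb, Vq_pos hS₂pd hxb]
  have hdec (l l' : Set.Icc d_m d_M) (xb : Fin (d_M + 1) → Fin n → ℝ) (hxb : xb ≠ 0) :
      U l' (Gmap n d_n d_M A An Ad l' xb) < U l xb := by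
    by_cases hl' : (l' : ℕ) ≤ d_n
    · obtain ⟨h₁, h₂⟩ := hmode1 l' l'.2.1 hl' xb hxb
      by_cases hl : (l : ℕ) ≤ d_n <;> simpa [U, hl, hl']
    · obtain ⟨h₂, h₁⟩ := hmode2 l' (not_le.1 hl') l'.2.2 xb hxb
      by_cases hl : (l : ℕ) ≤ d_n <;> simpa [U, hl, hl']
  let σ (k : ℕ) : Set.Icc d_m d_M := ⟨(d k).toNat, by have := hd k; constructor <;> omega⟩
  have hstate := tendsto_zero_of_forall_lyapunov_lt
    (fun l : Set.Icc d_m d_M => Gmap n d_n d_M A An Ad l) U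
    (fun l => Gmap_continuous A An Ad l) (fun l => Gmap_smul A An Ad l)
    (fun l => Vq_continuous _) (fun l => Vq_smul _) hUpos hdec σ
    (fun k : ℕ => delayState n d_M x k) fun k => by
      push_cast
      refine delayState_succ hnM (σ k).2.2 ?_
      rw [hx k, Int.toNat_of_nonneg (by have := hd k; omega)]
  simpa [Function.comp_def, delayState] using ((continuous_apply 0).tendsto 0).comp hstate

/-- **Lemma 3 (path-complete stability criterion).**
Let `V₁, V₂` be positive definite quadratic forms on `(ℝⁿ)^{d_M+1}`. If, for every nonzero
`x̄`, (i) `V₁(G_l(x̄)) < V₁(x̄)` and `V₁(G_l(x̄)) < V₂(x̄)` for all integers `d_m ≤ l ≤ d_n`,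
and (ii) `V₂(G_l(x̄)) < V₂(x̄)` and `V₂(G_l(x̄)) < V₁(x̄)` for all integers `d_n < l ≤ d_M`,
then every solution of the delay system, for every admissible delay signal, satisfies
`x(k) → 0` as `k → ∞`. -/
theorem path_complete_stability
    (n d_m d_n d_M : ℕ) (hn : 1 ≤ n) (hdm : 1 ≤ d_m) (hmn : d_m ≤ d_n) (hnM : d_n ≤ d_M)
    (A An Ad : Matrix (Fin n) (Fin n) ℝ)
    (S₁ S₂ : Matrix (Fin (d_M + 1) × Fin n) (Fin (d_M + 1) × Fin n) ℝ)
    (hS₁s : S₁.IsSymm)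
    (hS₁pd : ∀ v : Fin (d_M + 1) × Fin n → ℝ, v ≠ 0 → 0 < v ⬝ᵥ S₁ *ᵥ v)
    (hS₂s : S₂.IsSymm)
    (hS₂pd : ∀ v : Fin (d_M + 1) × Fin n → ℝ, v ≠ 0 → 0 < v ⬝ᵥ S₂ *ᵥ v)
    (hmode1 : ∀ l : ℕ, d_m ≤ l → l ≤ d_n →
      ∀ xb : Fin (d_M + 1) → Fin n → ℝ, xb ≠ 0 →
        Vq n d_M S₁ (Gmap n d_n d_M A An Ad l xb) < Vq n d_M S₁ xb ∧
        Vq n d_M S₁ (Gmap n d_n d_M A An Ad l xb) < Vq n d_M S₂ xb)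
    (hmode2 : ∀ l : ℕ, d_n < l → l ≤ d_M →
      ∀ xb : Fin (d_M + 1) → Fin n → ℝ, xb ≠ 0 →
        Vq n d_M S₂ (Gmap n d_n d_M A An Ad l xb) < Vq n d_M S₂ xb ∧
        Vq n d_M S₂ (Gmap n d_n d_M A An Ad l xb) < Vq n d_M S₁ xb)
    (x : ℤ → Fin n → ℝ) (d : ℕ → ℤ)
    (hd : ∀ k : ℕ, (d_m : ℤ) ≤ d k ∧ d k ≤ (d_M : ℤ))
    (hx : ∀ k : ℕ, x ((k : ℤ) + 1)
      = A *ᵥ x (k : ℤ) + An *ᵥ x ((k : ℤ) - (d_n : ℤ)) + Ad *ᵥ x ((k : ℤ) - d k)) :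
    Tendsto (fun k : ℕ => x (k : ℤ)) atTop (nhds 0) :=
  path_complete_stability_general n d_m d_n d_M hnM A An Ad S₁ S₂ hS₁pd hS₂pd hmode1 hmode2 x d hd
    hx
end

section
/- Positive definiteness and quadratic-form representation of the modified Lyapunov–Krasovskii functional V₁: if P₁ ∈ ℝ^{4n×4n} and Q₁, Q₂, Q₃, Z₁, Z₂, Z₃ ∈ ℝ^{n×n} are symmetric positive definite, then there exists a symmetric positive definite matrix S₁ ∈ ℝ^{n(d_M+1)×n(d_M+1)} such that for every sequence x : ℤ → ℝⁿ and every k, V₁(k) = x̄(k)ᵀS₁x̄(k), where x̄(k) = (x(k), x(k−1), …, x(k−d_M)) ∈ ℝ^{n(d_M+1)}. In particular V₁(k) > 0 whenever x̄(k) ≠ 0. -/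
open Matrix Finset

/-- The modified Lyapunov–Krasovskii functional `V₁`, with
`w₁(k) = (x(k), Σ_{l=k−d_m}^{k−1} x(l), Σ_{l=k−d_n}^{k−d_m−1} x(l), Σ_{l=k−d_M}^{k−d_n−1} x(l))`
and `η(i) = x(i) − x(i−1)`. -/
noncomputable def LKF1 (n d_m d_n d_M : ℕ)
    (P₁ : Matrix (Fin n ⊕ Fin n ⊕ Fin n ⊕ Fin n) (Fin n ⊕ Fin n ⊕ Fin n ⊕ Fin n) ℝ)
    (Q₁ Q₂ Q₃ Z₁ Z₂ Z₃ : Matrix (Fin n) (Fin n) ℝ)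
    (x : ℤ → Fin n → ℝ) (k : ℤ) : ℝ :=
  (Sum.elim (x k) (Sum.elim (∑ l ∈ Finset.Icc (k - (d_m : ℤ)) (k - 1), x l)
        (Sum.elim (∑ l ∈ Finset.Icc (k - (d_n : ℤ)) (k - (d_m : ℤ) - 1), x l)
          (∑ l ∈ Finset.Icc (k - (d_M : ℤ)) (k - (d_n : ℤ) - 1), x l))))
    ⬝ᵥ P₁ *ᵥ
    (Sum.elim (x k) (Sum.elim (∑ l ∈ Finset.Icc (k - (d_m : ℤ)) (k - 1), x l)
        (Sum.elim (∑ l ∈ Finset.Icc (k - (d_n : ℤ)) (k - (d_m : ℤ) - 1), x l)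
          (∑ l ∈ Finset.Icc (k - (d_M : ℤ)) (k - (d_n : ℤ) - 1), x l))))
  + ∑ l ∈ Finset.Icc (k - (d_m : ℤ)) (k - 1), x l ⬝ᵥ Q₁ *ᵥ x l
  + ∑ l ∈ Finset.Icc (k - (d_n : ℤ)) (k - (d_m : ℤ) - 1), x l ⬝ᵥ Q₂ *ᵥ x l
  + ∑ l ∈ Finset.Icc (k - (d_M : ℤ)) (k - (d_n : ℤ) - 1), x l ⬝ᵥ Q₃ *ᵥ x l
  + (d_m : ℝ) * ∑ l ∈ Finset.Icc (-(d_m : ℤ) + 1) 0,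
      ∑ i ∈ Finset.Icc (k + l) k, (x i - x (i - 1)) ⬝ᵥ Z₁ *ᵥ (x i - x (i - 1))
  + ((d_n : ℝ) - (d_m : ℝ)) * ∑ l ∈ Finset.Icc (-(d_n : ℤ) + 1) (-(d_m : ℤ)),
      ∑ i ∈ Finset.Icc (k + l) k, (x i - x (i - 1)) ⬝ᵥ Z₂ *ᵥ (x i - x (i - 1))
  + ((d_M : ℝ) - (d_n : ℝ)) * ∑ l ∈ Finset.Icc (-(d_M : ℤ) + 1) (-(d_n : ℤ)),
      ∑ i ∈ Finset.Icc (k + l) k, (x i - x (i - 1)) ⬝ᵥ Z₃ *ᵥ (x i - x (i - 1))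

namespace LKFaux

/-- Quadratic forms of pos. def. matrices are nonnegative. -/
lemma quad_nonneg {m : Type*} [Fintype m] (M : Matrix m m ℝ)
    (hM : ∀ v : m → ℝ, v ≠ 0 → 0 < v ⬝ᵥ M *ᵥ v) (a : m → ℝ) : 0 ≤ a ⬝ᵥ M *ᵥ a := by
  by_cases h : a = 0
  · simp [h]
  · exact (hM a h).le

lemma dotmul_swap {m : Type*} [Fintype m] (M : Matrix m m ℝ) (a b : m → ℝ) :
    a ⬝ᵥ M *ᵥ b = b ⬝ᵥ Mᵀ *ᵥ a := by
  rw [Matrix.dotProduct_mulVec, ← Matrix.vecMul_transpose, dotProduct_comm,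
    Matrix.transpose_transpose]

lemma sum_Icc_shift {M : Type*} [AddCommMonoid M] (f : ℤ → M) (a b k : ℤ) :
    ∑ l ∈ Finset.Icc a b, f l = ∑ t ∈ Finset.Icc (a - k) (b - k), f (k + t) := by
  have h : Finset.Icc a b = (Finset.Icc (a - k) (b - k)).map (addLeftEmbedding k) := by
    rw [Finset.map_add_left_Icc]; congr 1 <;> ring
  rw [h, Finset.sum_map]
  rfl

lemma shift_sum_congr {M : Type*} [AddCommMonoid M] (f g : ℤ → M) (k k' a b a' b' : ℤ)
    (h1 : a - k = a' - k') (h2 : b - k = b' - k')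
    (hfg : ∀ t, a - k ≤ t → t ≤ b - k → f (k + t) = g (k' + t)) :
    ∑ l ∈ Finset.Icc a b, f l = ∑ l ∈ Finset.Icc a' b', g l := by
  rw [sum_Icc_shift f a b k, sum_Icc_shift g a' b' k', ← h1, ← h2]
  exact Finset.sum_congr rfl fun t ht => by
    have h := Finset.mem_Icc.mp ht
    exact hfg t h.1 h.2


/-- The sequence built from a flattened vector: `seqV u (-p) = u (p, ·)` for `0 ≤ p ≤ d_M`. -/
noncomputable def seqV (n d_M : ℕ) (u : Fin (d_M + 1) × Fin n → ℝ) : ℤ → Fin n → ℝ :=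
  fun i j => if h : 0 ≤ -i ∧ (-i).toNat < d_M + 1 then u (⟨(-i).toNat, h.2⟩, j) else 0

lemma seqV_add (n d_M : ℕ) (u w : Fin (d_M + 1) × Fin n → ℝ) :
    seqV n d_M (u + w) = seqV n d_M u + seqV n d_M w := by
  funext i j
  simp only [seqV, Pi.add_apply]
  split <;> simp

lemma seqV_smul (n d_M : ℕ) (c : ℝ) (u : Fin (d_M + 1) × Fin n → ℝ) :
    seqV n d_M (c • u) = c • seqV n d_M u := by
  funext i j
  simp only [seqV, Pi.smul_apply, smul_eq_mul]
  split <;> simp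

lemma seqV_neg_coe (n d_M : ℕ) (u : Fin (d_M + 1) × Fin n → ℝ) (p : Fin (d_M + 1)) :
    seqV n d_M u (-((p : ℕ) : ℤ)) = fun j => u (p, j) := by
  funext j
  have hc : 0 ≤ -(-((p : ℕ) : ℤ)) ∧ (-(-((p : ℕ) : ℤ))).toNat < d_M + 1 := by
    constructor
    · omega
    · have := p.isLt; omega
  simp only [seqV]
  rw [dif_pos hc]
  simp only [neg_neg, Int.toNat_natCast, Fin.eta]

/-- `w₁` built from a flattened vector at time `k = 0`. -/
noncomputable def WV (n d_m d_n d_M : ℕ) (u : Fin (d_M + 1) × Fin n → ℝ) :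
    (Fin n ⊕ Fin n ⊕ Fin n ⊕ Fin n) → ℝ :=
  Sum.elim (seqV n d_M u 0)
    (Sum.elim (∑ l ∈ Finset.Icc ((0:ℤ) - (d_m : ℤ)) (0 - 1), seqV n d_M u l)
      (Sum.elim (∑ l ∈ Finset.Icc ((0:ℤ) - (d_n : ℤ)) (0 - (d_m : ℤ) - 1), seqV n d_M u l)
        (∑ l ∈ Finset.Icc ((0:ℤ) - (d_M : ℤ)) (0 - (d_n : ℤ) - 1), seqV n d_M u l)))

lemma WV_add (n d_m d_n d_M : ℕ) (u w : Fin (d_M + 1) × Fin n → ℝ) :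
    WV n d_m d_n d_M (u + w) = WV n d_m d_n d_M u + WV n d_m d_n d_M w := by
  funext s
  rcases s with j | s
  · simp [WV, seqV_add]
  rcases s with j | s
  · simp [WV, seqV_add, Finset.sum_add_distrib]
  rcases s with j | j <;>
  · simp [WV, seqV_add, Finset.sum_add_distrib]

lemma WV_smul (n d_m d_n d_M : ℕ) (c : ℝ) (u : Fin (d_M + 1) × Fin n → ℝ) :
    WV n d_m d_n d_M (c • u) = c • WV n d_m d_n d_M u := by
  funext s
  rcases s with j | s
  · simp [WV, seqV_smul]
  rcases s with j | s
  · simp [WV, seqV_smul, Finset.smul_sum, Finset.mul_sum]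
  rcases s with j | j <;>
  · simp [WV, seqV_smul, Finset.smul_sum, Finset.mul_sum]

/-- The bilinear version of the LKF at `k = 0`, as a function of flattened vectors. -/
noncomputable def Bl (n d_m d_n d_M : ℕ)
    (P₁ : Matrix (Fin n ⊕ Fin n ⊕ Fin n ⊕ Fin n) (Fin n ⊕ Fin n ⊕ Fin n ⊕ Fin n) ℝ)
    (Q₁ Q₂ Q₃ Z₁ Z₂ Z₃ : Matrix (Fin n) (Fin n) ℝ)
    (u w : Fin (d_M + 1) × Fin n → ℝ) : ℝ :=
  WV n d_m d_n d_M u ⬝ᵥ P₁ *ᵥ WV n d_m d_n d_M w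
  + ∑ l ∈ Finset.Icc ((0:ℤ) - (d_m : ℤ)) (0 - 1), seqV n d_M u l ⬝ᵥ Q₁ *ᵥ seqV n d_M w l
  + ∑ l ∈ Finset.Icc ((0:ℤ) - (d_n : ℤ)) (0 - (d_m : ℤ) - 1), seqV n d_M u l ⬝ᵥ Q₂ *ᵥ seqV n d_M w l
  + ∑ l ∈ Finset.Icc ((0:ℤ) - (d_M : ℤ)) (0 - (d_n : ℤ) - 1), seqV n d_M u l ⬝ᵥ Q₃ *ᵥ seqV n d_M w l
  + (d_m : ℝ) * ∑ l ∈ Finset.Icc (-(d_m : ℤ) + 1) 0,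
      ∑ i ∈ Finset.Icc ((0:ℤ) + l) 0,
        (seqV n d_M u i - seqV n d_M u (i - 1)) ⬝ᵥ Z₁ *ᵥ (seqV n d_M w i - seqV n d_M w (i - 1))
  + ((d_n : ℝ) - (d_m : ℝ)) * ∑ l ∈ Finset.Icc (-(d_n : ℤ) + 1) (-(d_m : ℤ)),
      ∑ i ∈ Finset.Icc ((0:ℤ) + l) 0,
        (seqV n d_M u i - seqV n d_M u (i - 1)) ⬝ᵥ Z₂ *ᵥ (seqV n d_M w i - seqV n d_M w (i - 1))
  + ((d_M : ℝ) - (d_n : ℝ)) * ∑ l ∈ Finset.Icc (-(d_M : ℤ) + 1) (-(d_n : ℤ)),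
      ∑ i ∈ Finset.Icc ((0:ℤ) + l) 0,
        (seqV n d_M u i - seqV n d_M u (i - 1)) ⬝ᵥ Z₃ *ᵥ (seqV n d_M w i - seqV n d_M w (i - 1))

lemma Bl_diag (n d_m d_n d_M : ℕ) (P₁) (Q₁ Q₂ Q₃ Z₁ Z₂ Z₃ : Matrix (Fin n) (Fin n) ℝ)
    (u : Fin (d_M + 1) × Fin n → ℝ) :
    Bl n d_m d_n d_M P₁ Q₁ Q₂ Q₃ Z₁ Z₂ Z₃ u u
      = LKF1 n d_m d_n d_M P₁ Q₁ Q₂ Q₃ Z₁ Z₂ Z₃ (seqV n d_M u) 0 := rfl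


section Bilin

variable (n d_m d_n d_M : ℕ)
  (P₁ : Matrix (Fin n ⊕ Fin n ⊕ Fin n ⊕ Fin n) (Fin n ⊕ Fin n ⊕ Fin n ⊕ Fin n) ℝ)
  (Q₁ Q₂ Q₃ Z₁ Z₂ Z₃ : Matrix (Fin n) (Fin n) ℝ)

lemma Bl_add_left (u u' w : Fin (d_M + 1) × Fin n → ℝ) :
    Bl n d_m d_n d_M P₁ Q₁ Q₂ Q₃ Z₁ Z₂ Z₃ (u + u') w
      = Bl n d_m d_n d_M P₁ Q₁ Q₂ Q₃ Z₁ Z₂ Z₃ u w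
        + Bl n d_m d_n d_M P₁ Q₁ Q₂ Q₃ Z₁ Z₂ Z₃ u' w := by
  unfold Bl
  simp only [WV_add, seqV_add, Pi.add_apply, add_sub_add_comm, add_dotProduct,
    Finset.sum_add_distrib, mul_add]
  ring

lemma Bl_smul_left (c : ℝ) (u w : Fin (d_M + 1) × Fin n → ℝ) :
    Bl n d_m d_n d_M P₁ Q₁ Q₂ Q₃ Z₁ Z₂ Z₃ (c • u) w
      = c * Bl n d_m d_n d_M P₁ Q₁ Q₂ Q₃ Z₁ Z₂ Z₃ u w := by
  unfold Bl
  simp only [WV_smul, seqV_smul, Pi.smul_apply, smul_eq_mul, ← smul_sub,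
    smul_dotProduct, ← Finset.mul_sum, smul_eq_mul]
  ring

lemma Bl_swap (u w : Fin (d_M + 1) × Fin n → ℝ) :
    Bl n d_m d_n d_M P₁ Q₁ Q₂ Q₃ Z₁ Z₂ Z₃ u w
      = Bl n d_m d_n d_M P₁ᵀ Q₁ᵀ Q₂ᵀ Q₃ᵀ Z₁ᵀ Z₂ᵀ Z₃ᵀ w u := by
  unfold Bl
  refine congrArg₂ (· + ·) (congrArg₂ (· + ·) (congrArg₂ (· + ·) (congrArg₂ (· + ·)
    (congrArg₂ (· + ·) (congrArg₂ (· + ·) ?_ ?_) ?_) ?_) ?_) ?_) ?_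
  · exact dotmul_swap _ _ _
  · exact Finset.sum_congr rfl fun l _ => dotmul_swap _ _ _
  · exact Finset.sum_congr rfl fun l _ => dotmul_swap _ _ _
  · exact Finset.sum_congr rfl fun l _ => dotmul_swap _ _ _
  · exact congrArg _ (Finset.sum_congr rfl fun l _ => Finset.sum_congr rfl fun i _ =>
      dotmul_swap _ _ _)
  · exact congrArg _ (Finset.sum_congr rfl fun l _ => Finset.sum_congr rfl fun i _ =>
      dotmul_swap _ _ _)
  · exact congrArg _ (Finset.sum_congr rfl fun l _ => Finset.sum_congr rfl fun i _ =>
      dotmul_swap _ _ _)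

lemma Bl_add_right (u w w' : Fin (d_M + 1) × Fin n → ℝ) :
    Bl n d_m d_n d_M P₁ Q₁ Q₂ Q₃ Z₁ Z₂ Z₃ u (w + w')
      = Bl n d_m d_n d_M P₁ Q₁ Q₂ Q₃ Z₁ Z₂ Z₃ u w
        + Bl n d_m d_n d_M P₁ Q₁ Q₂ Q₃ Z₁ Z₂ Z₃ u w' := by
  rw [Bl_swap, Bl_add_left, ← Bl_swap, ← Bl_swap]

lemma Bl_smul_right (c : ℝ) (u w : Fin (d_M + 1) × Fin n → ℝ) :
    Bl n d_m d_n d_M P₁ Q₁ Q₂ Q₃ Z₁ Z₂ Z₃ u (c • w)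
      = c * Bl n d_m d_n d_M P₁ Q₁ Q₂ Q₃ Z₁ Z₂ Z₃ u w := by
  rw [Bl_swap, Bl_smul_left, ← Bl_swap]

end Bilin

section Main

variable (n d_m d_n d_M : ℕ)
  (P₁ : Matrix (Fin n ⊕ Fin n ⊕ Fin n ⊕ Fin n) (Fin n ⊕ Fin n ⊕ Fin n ⊕ Fin n) ℝ)
  (Q₁ Q₂ Q₃ Z₁ Z₂ Z₃ : Matrix (Fin n) (Fin n) ℝ)

lemma seqV_extState (x : ℤ → Fin n → ℝ) (k t : ℤ) (h1 : -(d_M:ℤ) ≤ t) (h2 : t ≤ 0) :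
    seqV n d_M (extState n d_M x k) (0 + t) = x (k + t) := by
  funext j
  have hc : 0 ≤ -(0 + t) ∧ (-(0 + t)).toNat < d_M + 1 := ⟨by omega, by omega⟩
  simp only [seqV]
  rw [dif_pos hc]
  show x (k - (((-(0 + t)).toNat : ℕ) : ℤ)) j = x (k + t) j
  have he : k - (((-(0 + t)).toNat : ℕ) : ℤ) = k + t := by omega
  rw [he]

lemma LKF1_congr (hmn : d_m ≤ d_n) (hnM : d_n ≤ d_M)
    (x x' : ℤ → Fin n → ℝ) (k k' : ℤ)
    (h : ∀ t : ℤ, -(d_M:ℤ) ≤ t → t ≤ 0 → x (k + t) = x' (k' + t)) :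
    LKF1 n d_m d_n d_M P₁ Q₁ Q₂ Q₃ Z₁ Z₂ Z₃ x k
      = LKF1 n d_m d_n d_M P₁ Q₁ Q₂ Q₃ Z₁ Z₂ Z₃ x' k' := by
  have h0 : x k = x' k' := by
    have := h 0 (by omega) le_rfl
    simpa using this
  have E1 : ∑ l ∈ Finset.Icc (k - (d_m:ℤ)) (k - 1), x l
      = ∑ l ∈ Finset.Icc (k' - (d_m:ℤ)) (k' - 1), x' l :=
    shift_sum_congr x x' k k' _ _ _ _ (by ring) (by ring)
      (fun t ht1 ht2 => h t (by omega) (by omega))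
  have E2 : ∑ l ∈ Finset.Icc (k - (d_n:ℤ)) (k - (d_m:ℤ) - 1), x l
      = ∑ l ∈ Finset.Icc (k' - (d_n:ℤ)) (k' - (d_m:ℤ) - 1), x' l :=
    shift_sum_congr x x' k k' _ _ _ _ (by ring) (by ring)
      (fun t ht1 ht2 => h t (by omega) (by omega))
  have E3 : ∑ l ∈ Finset.Icc (k - (d_M:ℤ)) (k - (d_n:ℤ) - 1), x l
      = ∑ l ∈ Finset.Icc (k' - (d_M:ℤ)) (k' - (d_n:ℤ) - 1), x' l :=
    shift_sum_congr x x' k k' _ _ _ _ (by ring) (by ring)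
      (fun t ht1 ht2 => h t (by omega) (by omega))
  have EQ1 : ∑ l ∈ Finset.Icc (k - (d_m:ℤ)) (k - 1), x l ⬝ᵥ Q₁ *ᵥ x l
      = ∑ l ∈ Finset.Icc (k' - (d_m:ℤ)) (k' - 1), x' l ⬝ᵥ Q₁ *ᵥ x' l :=
    shift_sum_congr (fun l => x l ⬝ᵥ Q₁ *ᵥ x l) (fun l => x' l ⬝ᵥ Q₁ *ᵥ x' l) k k' _ _ _ _
      (by ring) (by ring) (fun t ht1 ht2 => by simp only [h t (by omega) (by omega)])
  have EQ2 : ∑ l ∈ Finset.Icc (k - (d_n:ℤ)) (k - (d_m:ℤ) - 1), x l ⬝ᵥ Q₂ *ᵥ x l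
      = ∑ l ∈ Finset.Icc (k' - (d_n:ℤ)) (k' - (d_m:ℤ) - 1), x' l ⬝ᵥ Q₂ *ᵥ x' l :=
    shift_sum_congr (fun l => x l ⬝ᵥ Q₂ *ᵥ x l) (fun l => x' l ⬝ᵥ Q₂ *ᵥ x' l) k k' _ _ _ _
      (by ring) (by ring) (fun t ht1 ht2 => by simp only [h t (by omega) (by omega)])
  have EQ3 : ∑ l ∈ Finset.Icc (k - (d_M:ℤ)) (k - (d_n:ℤ) - 1), x l ⬝ᵥ Q₃ *ᵥ x l
      = ∑ l ∈ Finset.Icc (k' - (d_M:ℤ)) (k' - (d_n:ℤ) - 1), x' l ⬝ᵥ Q₃ *ᵥ x' l :=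
    shift_sum_congr (fun l => x l ⬝ᵥ Q₃ *ᵥ x l) (fun l => x' l ⬝ᵥ Q₃ *ᵥ x' l) k k' _ _ _ _
      (by ring) (by ring) (fun t ht1 ht2 => by simp only [h t (by omega) (by omega)])
  have EZ : ∀ (Z : Matrix (Fin n) (Fin n) ℝ) (c c' : ℕ), c ≤ d_M →
      ∑ l ∈ Finset.Icc (-(c:ℤ) + 1) (-(c':ℤ)),
          ∑ i ∈ Finset.Icc (k + l) k, (x i - x (i - 1)) ⬝ᵥ Z *ᵥ (x i - x (i - 1))
        = ∑ l ∈ Finset.Icc (-(c:ℤ) + 1) (-(c':ℤ)),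
          ∑ i ∈ Finset.Icc (k' + l) k', (x' i - x' (i - 1)) ⬝ᵥ Z *ᵥ (x' i - x' (i - 1)) := by
    intro Z c c' hc
    refine Finset.sum_congr rfl fun l hl => ?_
    have hl' := Finset.mem_Icc.mp hl
    refine shift_sum_congr (fun i => (x i - x (i - 1)) ⬝ᵥ Z *ᵥ (x i - x (i - 1)))
      (fun i => (x' i - x' (i - 1)) ⬝ᵥ Z *ᵥ (x' i - x' (i - 1))) k k' (k + l) k (k' + l) k'
      (by ring) (by ring) (fun t ht1 ht2 => ?_)
    have hx1 : x (k + t) = x' (k' + t) := h t (by omega) (by omega)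
    have hx2 : x (k + t - 1) = x' (k' + t - 1) := by
      have hh := h (t - 1) (by omega) (by omega)
      rw [show k + (t - 1) = k + t - 1 by ring, show k' + (t - 1) = k' + t - 1 by ring] at hh
      exact hh
    simp only [hx1, hx2]
  have EZ1 := EZ Z₁ d_m 0 (by omega)
  have EZ2 := EZ Z₂ d_n d_m (by omega)
  have EZ3 := EZ Z₃ d_M d_n (by omega)
  simp only [Nat.cast_zero, neg_zero] at EZ1
  unfold LKF1
  rw [EQ1, EQ2, EQ3, EZ1, EZ2, EZ3, E1, E2, E3, h0]

lemma Bl_pos (hdm : 1 ≤ d_m) (hmn : d_m ≤ d_n) (hnM : d_n ≤ d_M)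
    (hP : ∀ v : Fin n ⊕ Fin n ⊕ Fin n ⊕ Fin n → ℝ, v ≠ 0 → 0 < v ⬝ᵥ P₁ *ᵥ v)
    (hQ₁ : ∀ v : Fin n → ℝ, v ≠ 0 → 0 < v ⬝ᵥ Q₁ *ᵥ v)
    (hQ₂ : ∀ v : Fin n → ℝ, v ≠ 0 → 0 < v ⬝ᵥ Q₂ *ᵥ v)
    (hQ₃ : ∀ v : Fin n → ℝ, v ≠ 0 → 0 < v ⬝ᵥ Q₃ *ᵥ v)
    (hZ₁ : ∀ v : Fin n → ℝ, v ≠ 0 → 0 < v ⬝ᵥ Z₁ *ᵥ v)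
    (hZ₂ : ∀ v : Fin n → ℝ, v ≠ 0 → 0 < v ⬝ᵥ Z₂ *ᵥ v)
    (hZ₃ : ∀ v : Fin n → ℝ, v ≠ 0 → 0 < v ⬝ᵥ Z₃ *ᵥ v)
    (v : Fin (d_M + 1) × Fin n → ℝ) (hv : v ≠ 0) :
    0 < Bl n d_m d_n d_M P₁ Q₁ Q₂ Q₃ Z₁ Z₂ Z₃ v v := by
  obtain ⟨⟨p, j⟩, hpj⟩ := Function.ne_iff.mp hv
  have hpj' : v (p, j) ≠ 0 := by simpa using hpj
  have hsv : seqV n d_M v (-((p : ℕ) : ℤ)) j ≠ 0 := by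
    rw [seqV_neg_coe]; exact hpj'
  have hT1 : 0 ≤ WV n d_m d_n d_M v ⬝ᵥ P₁ *ᵥ WV n d_m d_n d_M v := quad_nonneg _ hP _
  have hT2 : 0 ≤ ∑ l ∈ Finset.Icc ((0:ℤ) - (d_m:ℤ)) (0 - 1),
      seqV n d_M v l ⬝ᵥ Q₁ *ᵥ seqV n d_M v l :=
    Finset.sum_nonneg fun l _ => quad_nonneg _ hQ₁ _
  have hT3 : 0 ≤ ∑ l ∈ Finset.Icc ((0:ℤ) - (d_n:ℤ)) (0 - (d_m:ℤ) - 1),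
      seqV n d_M v l ⬝ᵥ Q₂ *ᵥ seqV n d_M v l :=
    Finset.sum_nonneg fun l _ => quad_nonneg _ hQ₂ _
  have hT4 : 0 ≤ ∑ l ∈ Finset.Icc ((0:ℤ) - (d_M:ℤ)) (0 - (d_n:ℤ) - 1),
      seqV n d_M v l ⬝ᵥ Q₃ *ᵥ seqV n d_M v l :=
    Finset.sum_nonneg fun l _ => quad_nonneg _ hQ₃ _
  have hT5 : 0 ≤ (d_m : ℝ) * ∑ l ∈ Finset.Icc (-(d_m : ℤ) + 1) 0,
      ∑ i ∈ Finset.Icc ((0:ℤ) + l) 0,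
        (seqV n d_M v i - seqV n d_M v (i - 1)) ⬝ᵥ Z₁ *ᵥ (seqV n d_M v i - seqV n d_M v (i - 1)) :=
    mul_nonneg (Nat.cast_nonneg _)
      (Finset.sum_nonneg fun l _ => Finset.sum_nonneg fun i _ => quad_nonneg _ hZ₁ _)
  have hT6 : 0 ≤ ((d_n : ℝ) - (d_m : ℝ)) * ∑ l ∈ Finset.Icc (-(d_n : ℤ) + 1) (-(d_m : ℤ)),
      ∑ i ∈ Finset.Icc ((0:ℤ) + l) 0,
        (seqV n d_M v i - seqV n d_M v (i - 1)) ⬝ᵥ Z₂ *ᵥ (seqV n d_M v i - seqV n d_M v (i - 1)) :=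
    mul_nonneg (by simp [sub_nonneg]; exact_mod_cast hmn)
      (Finset.sum_nonneg fun l _ => Finset.sum_nonneg fun i _ => quad_nonneg _ hZ₂ _)
  have hT7 : 0 ≤ ((d_M : ℝ) - (d_n : ℝ)) * ∑ l ∈ Finset.Icc (-(d_M : ℤ) + 1) (-(d_n : ℤ)),
      ∑ i ∈ Finset.Icc ((0:ℤ) + l) 0,
        (seqV n d_M v i - seqV n d_M v (i - 1)) ⬝ᵥ Z₃ *ᵥ (seqV n d_M v i - seqV n d_M v (i - 1)) :=
    mul_nonneg (by simp [sub_nonneg]; exact_mod_cast hnM)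
      (Finset.sum_nonneg fun l _ => Finset.sum_nonneg fun i _ => quad_nonneg _ hZ₃ _)
  have hcase : (p:ℕ) = 0 ∨ (1 ≤ (p:ℕ) ∧ (p:ℕ) ≤ d_m) ∨ (d_m < (p:ℕ) ∧ (p:ℕ) ≤ d_n)
      ∨ (d_n < (p:ℕ) ∧ (p:ℕ) ≤ d_M) := by
    have := p.isLt; omega
  unfold Bl
  rcases hcase with h0 | h1 | h2 | h3
  · have h00 : (-(((p:ℕ)):ℤ)) = 0 := by omega
    rw [h00] at hsv
    have hW : WV n d_m d_n d_M v ≠ 0 := by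
      intro hW0
      exact hsv (by simpa [WV] using congrFun hW0 (Sum.inl j))
    have := hP _ hW
    linarith
  · have hmem : (-(((p:ℕ)):ℤ)) ∈ Finset.Icc ((0:ℤ) - (d_m:ℤ)) (0 - 1) := by
      simp only [Finset.mem_Icc]; omega
    have hpos : 0 < ∑ l ∈ Finset.Icc ((0:ℤ) - (d_m:ℤ)) (0 - 1),
        seqV n d_M v l ⬝ᵥ Q₁ *ᵥ seqV n d_M v l :=
      Finset.sum_pos' (fun l _ => quad_nonneg _ hQ₁ _)
        ⟨_, hmem, hQ₁ _ (fun h => hsv (congrFun h j))⟩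
    linarith
  · have hmem : (-(((p:ℕ)):ℤ)) ∈ Finset.Icc ((0:ℤ) - (d_n:ℤ)) (0 - (d_m:ℤ) - 1) := by
      simp only [Finset.mem_Icc]; omega
    have hpos : 0 < ∑ l ∈ Finset.Icc ((0:ℤ) - (d_n:ℤ)) (0 - (d_m:ℤ) - 1),
        seqV n d_M v l ⬝ᵥ Q₂ *ᵥ seqV n d_M v l :=
      Finset.sum_pos' (fun l _ => quad_nonneg _ hQ₂ _)
        ⟨_, hmem, hQ₂ _ (fun h => hsv (congrFun h j))⟩
    linarith
  · have hmem : (-(((p:ℕ)):ℤ)) ∈ Finset.Icc ((0:ℤ) - (d_M:ℤ)) (0 - (d_n:ℤ) - 1) := by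
      simp only [Finset.mem_Icc]; omega
    have hpos : 0 < ∑ l ∈ Finset.Icc ((0:ℤ) - (d_M:ℤ)) (0 - (d_n:ℤ) - 1),
        seqV n d_M v l ⬝ᵥ Q₃ *ᵥ seqV n d_M v l :=
      Finset.sum_pos' (fun l _ => quad_nonneg _ hQ₃ _)
        ⟨_, hmem, hQ₃ _ (fun h => hsv (congrFun h j))⟩
    linarith

end Main

section Fin2
variable (n d_m d_n d_M : ℕ)
  (P₁ : Matrix (Fin n ⊕ Fin n ⊕ Fin n ⊕ Fin n) (Fin n ⊕ Fin n ⊕ Fin n ⊕ Fin n) ℝ)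
  (Q₁ Q₂ Q₃ Z₁ Z₂ Z₃ : Matrix (Fin n) (Fin n) ℝ)

/-- The LKF bilinear form, bundled. -/
noncomputable def BlL : (Fin (d_M + 1) × Fin n → ℝ) →ₗ[ℝ] (Fin (d_M + 1) × Fin n → ℝ) →ₗ[ℝ] ℝ :=
  LinearMap.mk₂ ℝ (Bl n d_m d_n d_M P₁ Q₁ Q₂ Q₃ Z₁ Z₂ Z₃)
    (Bl_add_left n d_m d_n d_M P₁ Q₁ Q₂ Q₃ Z₁ Z₂ Z₃)
    (fun c u w => by rw [Bl_smul_left, smul_eq_mul])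
    (Bl_add_right n d_m d_n d_M P₁ Q₁ Q₂ Q₃ Z₁ Z₂ Z₃)
    (fun c u w => by rw [Bl_smul_right, smul_eq_mul])

noncomputable def SMat : Matrix (Fin (d_M + 1) × Fin n) (Fin (d_M + 1) × Fin n) ℝ :=
  LinearMap.toMatrix₂' ℝ (BlL n d_m d_n d_M P₁ Q₁ Q₂ Q₃ Z₁ Z₂ Z₃)

lemma SMat_repr (v w : Fin (d_M + 1) × Fin n → ℝ) :
    v ⬝ᵥ SMat n d_m d_n d_M P₁ Q₁ Q₂ Q₃ Z₁ Z₂ Z₃ *ᵥ w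
      = Bl n d_m d_n d_M P₁ Q₁ Q₂ Q₃ Z₁ Z₂ Z₃ v w := by
  have h1 : Matrix.toLinearMap₂' ℝ (SMat n d_m d_n d_M P₁ Q₁ Q₂ Q₃ Z₁ Z₂ Z₃)
      = BlL n d_m d_n d_M P₁ Q₁ Q₂ Q₃ Z₁ Z₂ Z₃ :=
    LinearEquiv.symm_apply_apply (LinearMap.toMatrix₂' ℝ) _
  calc v ⬝ᵥ SMat n d_m d_n d_M P₁ Q₁ Q₂ Q₃ Z₁ Z₂ Z₃ *ᵥ w
      = Matrix.toLinearMap₂' ℝ (SMat n d_m d_n d_M P₁ Q₁ Q₂ Q₃ Z₁ Z₂ Z₃) v w :=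
        (Matrix.toLinearMap₂'_apply' _ v w).symm
    _ = Bl n d_m d_n d_M P₁ Q₁ Q₂ Q₃ Z₁ Z₂ Z₃ v w := by rw [h1]; rfl

lemma SMat_symm (hPs : P₁.IsSymm) (hQ₁s : Q₁.IsSymm) (hQ₂s : Q₂.IsSymm) (hQ₃s : Q₃.IsSymm)
    (hZ₁s : Z₁.IsSymm) (hZ₂s : Z₂.IsSymm) (hZ₃s : Z₃.IsSymm) :
    (SMat n d_m d_n d_M P₁ Q₁ Q₂ Q₃ Z₁ Z₂ Z₃).IsSymm := by
  have hPs' : P₁ᵀ = P₁ := hPs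
  have h1 : Q₁ᵀ = Q₁ := hQ₁s
  have h2 : Q₂ᵀ = Q₂ := hQ₂s
  have h3 : Q₃ᵀ = Q₃ := hQ₃s
  have z1 : Z₁ᵀ = Z₁ := hZ₁s
  have z2 : Z₂ᵀ = Z₂ := hZ₂s
  have z3 : Z₃ᵀ = Z₃ := hZ₃s
  have hcomm : ∀ u w, Bl n d_m d_n d_M P₁ Q₁ Q₂ Q₃ Z₁ Z₂ Z₃ u w
      = Bl n d_m d_n d_M P₁ Q₁ Q₂ Q₃ Z₁ Z₂ Z₃ w u := by
    intro u w
    rw [Bl_swap, hPs', h1, h2, h3, z1, z2, z3]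
  show _ᵀ = _
  ext i k
  rw [Matrix.transpose_apply]
  show BlL n d_m d_n d_M P₁ Q₁ Q₂ Q₃ Z₁ Z₂ Z₃ (Pi.single k 1) (Pi.single i 1)
    = BlL n d_m d_n d_M P₁ Q₁ Q₂ Q₃ Z₁ Z₂ Z₃ (Pi.single i 1) (Pi.single k 1)
  exact hcomm _ _

end Fin2
end LKFaux

/-- **Positive definiteness and quadratic-form representation of the modified
Lyapunov–Krasovskii functional `V₁`:** there exists a symmetric positive definite `S₁`
with `V₁(k) = x̄(k)ᵀS₁x̄(k)`; in particular `V₁(k) > 0` whenever `x̄(k) ≠ 0`. -/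
theorem LKF1_quadratic_form (n d_m d_n d_M : ℕ) (hn : 1 ≤ n) (hdm : 1 ≤ d_m)
    (hmn : d_m ≤ d_n) (hnM : d_n ≤ d_M)
    (P₁ : Matrix (Fin n ⊕ Fin n ⊕ Fin n ⊕ Fin n) (Fin n ⊕ Fin n ⊕ Fin n ⊕ Fin n) ℝ)
    (Q₁ Q₂ Q₃ Z₁ Z₂ Z₃ : Matrix (Fin n) (Fin n) ℝ)
    (hPs : P₁.IsSymm)
    (hP : ∀ v : Fin n ⊕ Fin n ⊕ Fin n ⊕ Fin n → ℝ, v ≠ 0 → 0 < v ⬝ᵥ P₁ *ᵥ v)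
    (hQ₁s : Q₁.IsSymm) (hQ₁ : ∀ v : Fin n → ℝ, v ≠ 0 → 0 < v ⬝ᵥ Q₁ *ᵥ v)
    (hQ₂s : Q₂.IsSymm) (hQ₂ : ∀ v : Fin n → ℝ, v ≠ 0 → 0 < v ⬝ᵥ Q₂ *ᵥ v)
    (hQ₃s : Q₃.IsSymm) (hQ₃ : ∀ v : Fin n → ℝ, v ≠ 0 → 0 < v ⬝ᵥ Q₃ *ᵥ v)
    (hZ₁s : Z₁.IsSymm) (hZ₁ : ∀ v : Fin n → ℝ, v ≠ 0 → 0 < v ⬝ᵥ Z₁ *ᵥ v)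
    (hZ₂s : Z₂.IsSymm) (hZ₂ : ∀ v : Fin n → ℝ, v ≠ 0 → 0 < v ⬝ᵥ Z₂ *ᵥ v)
    (hZ₃s : Z₃.IsSymm) (hZ₃ : ∀ v : Fin n → ℝ, v ≠ 0 → 0 < v ⬝ᵥ Z₃ *ᵥ v) :
    ∃ S₁ : Matrix (Fin (d_M + 1) × Fin n) (Fin (d_M + 1) × Fin n) ℝ,
      S₁.IsSymm ∧ (∀ v : Fin (d_M + 1) × Fin n → ℝ, v ≠ 0 → 0 < v ⬝ᵥ S₁ *ᵥ v) ∧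
      ∀ (x : ℤ → Fin n → ℝ) (k : ℤ),
        LKF1 n d_m d_n d_M P₁ Q₁ Q₂ Q₃ Z₁ Z₂ Z₃ x k
          = extState n d_M x k ⬝ᵥ S₁ *ᵥ extState n d_M x k ∧
        (extState n d_M x k ≠ 0 →
          0 < LKF1 n d_m d_n d_M P₁ Q₁ Q₂ Q₃ Z₁ Z₂ Z₃ x k) := by
  classical
  refine ⟨LKFaux.SMat n d_m d_n d_M P₁ Q₁ Q₂ Q₃ Z₁ Z₂ Z₃,
    LKFaux.SMat_symm n d_m d_n d_M P₁ Q₁ Q₂ Q₃ Z₁ Z₂ Z₃ hPs hQ₁s hQ₂s hQ₃s hZ₁s hZ₂s hZ₃s,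
    fun v hv => by
      rw [LKFaux.SMat_repr]
      exact LKFaux.Bl_pos n d_m d_n d_M P₁ Q₁ Q₂ Q₃ Z₁ Z₂ Z₃ hdm hmn hnM
        hP hQ₁ hQ₂ hQ₃ hZ₁ hZ₂ hZ₃ v hv,
    fun x k => ?_⟩
  have hrepr : LKF1 n d_m d_n d_M P₁ Q₁ Q₂ Q₃ Z₁ Z₂ Z₃ x k
      = LKFaux.Bl n d_m d_n d_M P₁ Q₁ Q₂ Q₃ Z₁ Z₂ Z₃ (extState n d_M x k)
          (extState n d_M x k) := by
    rw [LKFaux.Bl_diag]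
    exact LKFaux.LKF1_congr n d_m d_n d_M P₁ Q₁ Q₂ Q₃ Z₁ Z₂ Z₃ hmn hnM x
      (LKFaux.seqV n d_M (extState n d_M x k)) k 0
      (fun t h1 h2 => (LKFaux.seqV_extState n d_M x k t h1 h2).symm)
  constructor
  · rw [hrepr, LKFaux.SMat_repr]
  · intro hne
    rw [hrepr]
    exact LKFaux.Bl_pos n d_m d_n d_M P₁ Q₁ Q₂ Q₃ Z₁ Z₂ Z₃ hdm hmn hnM
      hP hQ₁ hQ₂ hQ₃ hZ₁ hZ₂ hZ₃ _ hne
end
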